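/- arXiv:2208.12205 — 4 statements merged into one kernel-verified Lean document; each statement's English description precedes it below -/
import Mathlib

section
/- Let S₁, S₂ ⊂ ℝ be disjoint bounded measurable sets of positive Lebesgue measure with S₁ + a ⊆ S₂ for some real number a ≠ 0. Suppose there exist sets Λ₁ ⊆ ℝ \ (1/a)ℤ and Λ₂ ⊆ (1/a)ℤ with dist(Λ₁, (1/a)ℤ) > 0 such that E(Λ₁) is complete in L²(S₁) and E(Λ₂) is complete in L²(S₂). Then E(Λ₁ ∪ Λ₂) is complete in L²(S₁ ∪ S₂). -/
open MeasureTheory Set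

open Classical in
/-- The exponential function `t ↦ e^{2πiλt}` as an element of `L²(S)`. -/
noncomputable def expLp (S : Set ℝ) (l : ℝ) : Lp ℂ 2 (volume.restrict S) :=
  if h : MemLp (fun t : ℝ => Complex.exp (2 * Real.pi * Complex.I * l * t)) 2 (volume.restrict S)
  then h.toLp _ else 0

/-- The exponential system `E(Λ)` is complete in `L²(S)`:
its (finite) linear span is dense. -/
def ExpComplete (S Λ : Set ℝ) : Prop :=
  (Submodule.span ℂ (expLp S '' Λ)).topologicalClosure = ⊤

/-- The exponential system `E(Λ)` is a Riesz sequence in `L²(S)` with bounds `A ≤ B`. -/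
def ExpRieszSequenceWith (S Λ : Set ℝ) (A B : ℝ) : Prop :=
  0 < A ∧ A ≤ B ∧ ∀ (F : Finset ℝ) (c : ℝ → ℂ), (F : Set ℝ) ⊆ Λ →
    A * ∑ l ∈ F, ‖c l‖ ^ 2 ≤ ‖∑ l ∈ F, c l • expLp S l‖ ^ 2 ∧
    ‖∑ l ∈ F, c l • expLp S l‖ ^ 2 ≤ B * ∑ l ∈ F, ‖c l‖ ^ 2

/-- The exponential system `E(Λ)` is a Riesz sequence in `L²(S)`. -/
def ExpRieszSequence (S Λ : Set ℝ) : Prop :=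
  ∃ A B : ℝ, ExpRieszSequenceWith S Λ A B

/-- The exponential system `E(Λ)` is a Riesz basis for `L²(S)`:
a complete Riesz sequence. -/
def ExpRieszBasis (S Λ : Set ℝ) : Prop :=
  ExpComplete S Λ ∧ ExpRieszSequence S Λ

/-- The exponential system `E(Λ)` is a frame for `L²(S)` with bounds `A ≤ B`. -/
def ExpFrameWith (S Λ : Set ℝ) (A B : ℝ) : Prop :=
  0 < A ∧ A ≤ B ∧ ∀ f : Lp ℂ 2 (volume.restrict S),
    A * ‖f‖ ^ 2 ≤ ∑' l : Λ, ‖(inner ℂ f (expLp S (l : ℝ)) : ℂ)‖ ^ 2 ∧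
    ∑' l : Λ, ‖(inner ℂ f (expLp S (l : ℝ)) : ℂ)‖ ^ 2 ≤ B * ‖f‖ ^ 2

/-- The exponential system `E(Λ)` is a frame for `L²(S)`. -/
def ExpFrame (S Λ : Set ℝ) : Prop :=
  ∃ A B : ℝ, ExpFrameWith S Λ A B

/-- The square of the smallest singular value of a (rectangular) matrix. -/
noncomputable def sigmaMinSq {K L : Type*} [Fintype K] [Fintype L] (W : Matrix K L ℂ) : ℝ :=
  if Fintype.card L ≤ Fintype.card K then
    sInf {r : ℝ | ∃ v : L → ℂ, (∑ i, ‖v i‖ ^ 2) = 1 ∧ r = ∑ k, ‖W.mulVec v k‖ ^ 2}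
  else
    sInf {r : ℝ | ∃ v : K → ℂ, (∑ i, ‖v i‖ ^ 2) = 1 ∧ r = ∑ l, ‖W.conjTranspose.mulVec v l‖ ^ 2}

namespace ExpAux

noncomputable def efun (l : ℝ) : ℝ → ℂ := fun t => Complex.exp (2 * Real.pi * Complex.I * l * t)

lemma efun_norm (l t : ℝ) : ‖efun l t‖ = 1 := by
  have h : (2 * Real.pi * Complex.I * l * t : ℂ) = ((2 * Real.pi * l * t : ℝ) : ℂ) * Complex.I := by
    push_cast; ring
  rw [efun]; rw [h, Complex.norm_exp_ofReal_mul_I]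

lemma efun_cont (l : ℝ) : Continuous (efun l) := by
  unfold efun; fun_prop

lemma finiteRestrict (S : Set ℝ) (hb : Bornology.IsBounded S) :
    IsFiniteMeasure (volume.restrict S) :=
  ⟨by rw [Measure.restrict_apply_univ]; exact hb.measure_lt_top⟩

lemma efun_memLp (S : Set ℝ) [IsFiniteMeasure (volume.restrict S)] (l : ℝ) :
    MemLp (efun l) 2 (volume.restrict S) :=
  MemLp.of_bound (efun_cont l).aestronglyMeasurable 1
    (Filter.Eventually.of_forall fun t => (efun_norm l t).le)

lemma expLp_coe (S : Set ℝ) (hb : Bornology.IsBounded S) (l : ℝ) :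
    expLp S l =ᵐ[volume.restrict S] efun l := by
  haveI := finiteRestrict S hb
  rw [expLp, dif_pos (show MemLp (fun t : ℝ => Complex.exp (2 * Real.pi * Complex.I * l * t)) 2
    (volume.restrict S) from efun_memLp S l)]
  exact MemLp.coeFn_toLp _

lemma inner_expLp (S : Set ℝ) (hb : Bornology.IsBounded S) (l : ℝ)
    (f : Lp ℂ 2 (volume.restrict S)) :
    (inner ℂ (expLp S l) f : ℂ) = ∫ t in S, (starRingEnd ℂ) (efun l t) * f t := by
  rw [MeasureTheory.L2.inner_def]
  refine integral_congr_ae ?_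
  filter_upwards [expLp_coe S hb l] with t ht
  rw [RCLike.inner_apply, ht, mul_comm]

lemma expComplete_iff (S Λ : Set ℝ) :
    ExpComplete S Λ ↔ ∀ f : Lp ℂ 2 (volume.restrict S),
      (∀ l ∈ Λ, (inner ℂ (expLp S l) f : ℂ) = 0) → f = 0 := by
  rw [ExpComplete, Submodule.topologicalClosure_eq_top_iff]
  constructor
  · intro h f hf
    have hmem : f ∈ (Submodule.span ℂ (expLp S '' Λ))ᗮ := by
      rw [Submodule.mem_orthogonal]
      intro u hu
      induction hu using Submodule.span_induction with
      | mem x hx => obtain ⟨l, hl, rfl⟩ := hx; exact hf l hl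
      | zero => simp
      | add x y _ _ hx hy => rw [inner_add_left, hx, hy, add_zero]
      | smul c x _ hx => rw [inner_smul_left, hx, mul_zero]
    rw [h] at hmem; simpa using hmem
  · intro h
    rw [Submodule.eq_bot_iff]
    intro f hf
    rw [Submodule.mem_orthogonal] at hf
    exact h f fun l hl => hf _ (Submodule.subset_span (mem_image_of_mem _ hl))

lemma complete_ae (S Λ : Set ℝ) (hb : Bornology.IsBounded S) (h : ExpComplete S Λ)
    (G : ℝ → ℂ) (hG : MemLp G 2 (volume.restrict S))
    (h0 : ∀ l ∈ Λ, ∫ t in S, (starRingEnd ℂ) (efun l t) * G t = 0) :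
    G =ᵐ[volume.restrict S] 0 := by
  have hz := (expComplete_iff S Λ).1 h (hG.toLp G) ?_
  · exact (hG.coeFn_toLp.symm.trans (hz ▸ Lp.coeFn_zero ℂ 2 (volume.restrict S)))
  · intro l hl
    rw [inner_expLp S hb l]
    rw [← h0 l hl]
    refine integral_congr_ae ?_
    filter_upwards [hG.coeFn_toLp] with t ht
    rw [ht]

lemma integrable_conj_mul (l : ℝ) (μ : Measure ℝ) [IsFiniteMeasure μ] {G : ℝ → ℂ}
    (hG : MemLp G 2 μ) : Integrable (fun t => (starRingEnd ℂ) (efun l t) * G t) μ :=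
  (hG.integrable one_le_two).bdd_mul
    ((continuous_star.comp (efun_cont l)).aestronglyMeasurable)
    (c := 1) (Filter.Eventually.of_forall fun t => by rw [RCLike.norm_conj, efun_norm])

end ExpAux

open ExpAux

theorem statement_1
    (S₁ S₂ : Set ℝ) (hS₁m : MeasurableSet S₁) (hS₂m : MeasurableSet S₂)
    (hS₁b : Bornology.IsBounded S₁) (hS₂b : Bornology.IsBounded S₂)
    (hS₁pos : 0 < volume S₁) (hS₂pos : 0 < volume S₂)
    (hdisj : Disjoint S₁ S₂)
    (a : ℝ) (ha : a ≠ 0) (hsub : (fun x => x + a) '' S₁ ⊆ S₂)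
    (Λ₁ Λ₂ : Set ℝ)
    (hΛ₁ : ∀ x ∈ Λ₁, ¬ ∃ n : ℤ, x = n / a)
    (hΛ₂ : ∀ x ∈ Λ₂, ∃ n : ℤ, x = n / a)
    (hdist : ∃ d : ℝ, 0 < d ∧ ∀ x ∈ Λ₁, ∀ n : ℤ, d ≤ |x - n / a|)
    (h₁ : ExpComplete S₁ Λ₁) (h₂ : ExpComplete S₂ Λ₂) :
    ExpComplete (S₁ ∪ S₂) (Λ₁ ∪ Λ₂) := by
  have hUb : Bornology.IsBounded (S₁ ∪ S₂) := hS₁b.union hS₂b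
  rw [expComplete_iff]
  intro f hf
  haveI hUfin : IsFiniteMeasure (volume.restrict (S₁ ∪ S₂)) := finiteRestrict _ hUb
  haveI h1fin : IsFiniteMeasure (volume.restrict S₁) := finiteRestrict _ hS₁b
  haveI h2fin : IsFiniteMeasure (volume.restrict S₂) := finiteRestrict _ hS₂b
  obtain ⟨F, hFmeas, hfF⟩ : ∃ F : ℝ → ℂ, StronglyMeasurable F ∧
      ⇑f =ᵐ[volume.restrict (S₁ ∪ S₂)] F :=
    ⟨(Lp.aestronglyMeasurable f).mk f, (Lp.aestronglyMeasurable f).stronglyMeasurable_mk,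
      (Lp.aestronglyMeasurable f).ae_eq_mk⟩
  have hFmem : MemLp F 2 (volume.restrict (S₁ ∪ S₂)) := (Lp.memLp f).ae_eq hfF
  have hF1mem : MemLp F 2 (volume.restrict S₁) :=
    hFmem.mono_measure (Measure.restrict_mono subset_union_left le_rfl)
  have hF2mem : MemLp F 2 (volume.restrict S₂) :=
    hFmem.mono_measure (Measure.restrict_mono subset_union_right le_rfl)
  set T : Set ℝ := (fun x => x + a) '' S₁ with hTdef
  have hTeq : T = (fun x => x + (-a)) ⁻¹' S₁ := by
    ext x
    constructor
    · rintro ⟨y, hy, rfl⟩; simpa using hy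
    · intro hx; exact ⟨x + (-a), hx, by ring⟩
  have hTm : MeasurableSet T := hTeq ▸ hS₁m.preimage (measurable_add_const (-a))
  haveI hTfin : IsFiniteMeasure (volume.restrict T) := finiteRestrict _ (hS₂b.subset hsub)
  have hmp : MeasurePreserving (fun x : ℝ => x + (-a))
      (volume.restrict T) (volume.restrict S₁) := by
    rw [hTeq]
    exact (measurePreserving_add_right volume (-a)).restrict_preimage hS₁m
  have hemb : MeasurableEmbedding (fun x : ℝ => x + (-a)) :=
    (MeasurableEquiv.addRight (-a)).measurableEmbedding
  have hchg : ∀ h : ℝ → ℂ, (∫ s in T, h (s + (-a))) = ∫ t in S₁, h t := fun h =>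
    hmp.integral_comp hemb h
  have hmul : ∀ (l x y : ℝ), efun l (x + y) = efun l x * efun l y := by
    intro l x y
    unfold efun
    rw [← Complex.exp_add]
    congr 1
    push_cast
    ring
  have hint1 : ∀ l, Integrable (fun t => (starRingEnd ℂ) (efun l t) * F t)
      (volume.restrict S₁) := fun l => integrable_conj_mul l _ hF1mem
  have hint2 : ∀ l, Integrable (fun t => (starRingEnd ℂ) (efun l t) * F t)
      (volume.restrict S₂) := fun l => integrable_conj_mul l _ hF2mem
  have horth : ∀ l ∈ Λ₁ ∪ Λ₂,
      (∫ t in S₁, (starRingEnd ℂ) (efun l t) * F t)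
        + (∫ t in S₂, (starRingEnd ℂ) (efun l t) * F t) = 0 := by
    intro l hl
    have h0 := hf l hl
    rw [inner_expLp _ hUb] at h0
    have hcongr : (∫ t in S₁ ∪ S₂, (starRingEnd ℂ) (efun l t) * f t)
        = ∫ t in S₁ ∪ S₂, (starRingEnd ℂ) (efun l t) * F t := by
      refine integral_congr_ae ?_
      filter_upwards [hfF] with t ht
      rw [ht]
    rw [hcongr, setIntegral_union hdisj hS₂m (hint1 l) (hint2 l)] at h0
    exact h0
  set Fa : ℝ → ℂ := fun s => F (s + (-a)) with hFadef
  have hFamem : MemLp Fa 2 (volume.restrict T) := by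
    have hmap : Measure.map (fun x : ℝ => x + -a) (volume.restrict T) = volume.restrict S₁ :=
      hmp.map_eq
    have h : MemLp F 2 (Measure.map (fun x : ℝ => x + -a) (volume.restrict T)) := by
      rw [hmap]; exact hF1mem
    exact h.comp_of_map hmp.measurable.aemeasurable
  have hIndmem : MemLp (T.indicator Fa) 2 (volume.restrict S₂) := by
    refine ⟨((hFmeas.comp_measurable (measurable_add_const (-a))).indicator
      hTm).aestronglyMeasurable, ?_⟩
    calc eLpNorm (T.indicator Fa) 2 (volume.restrict S₂)
        ≤ eLpNorm (T.indicator Fa) 2 volume := eLpNorm_mono_measure _ Measure.restrict_le_self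
      _ = eLpNorm Fa 2 (volume.restrict T) := eLpNorm_indicator_eq_eLpNorm_restrict hTm
      _ < ⊤ := hFamem.2
  have hGmem : MemLp (fun s => F s + T.indicator Fa s) 2 (volume.restrict S₂) :=
    hF2mem.add hIndmem
  have heqind : ∀ l, (fun s => (starRingEnd ℂ) (efun l s) * T.indicator Fa s)
      = T.indicator fun s => (starRingEnd ℂ) (efun l s) * Fa s := by
    intro l
    funext s
    by_cases hs : s ∈ T <;>
      simp [Set.indicator_of_mem, Set.indicator_of_notMem, hs]
  have hindint : ∀ l, Integrable (fun s => (starRingEnd ℂ) (efun l s) * T.indicator Fa s)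
      (volume.restrict S₂) := by
    intro l
    rw [heqind l]
    have hT : IntegrableOn (fun s => (starRingEnd ℂ) (efun l s) * Fa s) T volume :=
      integrable_conj_mul l _ hFamem
    exact (hT.integrable_indicator hTm).mono_measure Measure.restrict_le_self
  have hindval : ∀ l, (∫ s in S₂, (starRingEnd ℂ) (efun l s) * T.indicator Fa s)
      = (starRingEnd ℂ) (efun l a) * ∫ t in S₁, (starRingEnd ℂ) (efun l t) * F t := by
    intro l
    rw [heqind l, setIntegral_indicator hTm, inter_eq_self_of_subset_right hsub]
    calc (∫ s in T, (starRingEnd ℂ) (efun l s) * Fa s)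
        = ∫ s in T, (fun t => (starRingEnd ℂ) (efun l a)
            * ((starRingEnd ℂ) (efun l t) * F t)) (s + (-a)) := by
          refine integral_congr_ae (Filter.Eventually.of_forall fun s => ?_)
          show (starRingEnd ℂ) (efun l s) * Fa s
            = (starRingEnd ℂ) (efun l a) * ((starRingEnd ℂ) (efun l (s + (-a))) * F (s + (-a)))
          have he : efun l s = efun l (s + (-a)) * efun l a := by
            rw [← hmul l (s + (-a)) a]
            congr 1
            ring
          rw [he, map_mul, hFadef]
          ring
      _ = ∫ t in S₁, (starRingEnd ℂ) (efun l a) * ((starRingEnd ℂ) (efun l t) * F t) :=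
          hchg (fun t => (starRingEnd ℂ) (efun l a) * ((starRingEnd ℂ) (efun l t) * F t))
      _ = (starRingEnd ℂ) (efun l a) * ∫ t in S₁, (starRingEnd ℂ) (efun l t) * F t :=
          integral_const_mul _ _
  have hsplit : ∀ l, (∫ t in S₂, (starRingEnd ℂ) (efun l t) * (F t + T.indicator Fa t))
      = (∫ t in S₂, (starRingEnd ℂ) (efun l t) * F t)
        + (starRingEnd ℂ) (efun l a) * ∫ t in S₁, (starRingEnd ℂ) (efun l t) * F t := by
    intro l
    rw [← hindval l, ← integral_add (hint2 l) (hindint l)]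
    refine integral_congr_ae (Filter.Eventually.of_forall fun t => ?_)
    ring
  -- Step 1: G vanishes a.e. on S₂
  have hG0 : (fun s => F s + T.indicator Fa s) =ᵐ[volume.restrict S₂] 0 := by
    refine complete_ae S₂ Λ₂ hS₂b h₂ _ hGmem ?_
    intro l hl
    obtain ⟨n, rfl⟩ := hΛ₂ l hl
    have h1 : efun ((n : ℝ) / a) a = 1 := by
      unfold efun
      have hcast : (2 * (Real.pi : ℂ) * Complex.I * (((n : ℝ) / a : ℝ) : ℂ) * (a : ℂ))
          = (n : ℂ) * (2 * Real.pi * Complex.I) := by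
        have haC : (a : ℂ) ≠ 0 := Complex.ofReal_ne_zero.2 ha
        push_cast
        field_simp
      rw [hcast, Complex.exp_int_mul_two_pi_mul_I]
    rw [hsplit, h1, map_one, one_mul, add_comm]
    exact horth _ (Or.inr hl)
  -- Step 2: the S₁ integrals vanish for l ∈ Λ₁
  have hI1 : ∀ l ∈ Λ₁, (∫ t in S₁, (starRingEnd ℂ) (efun l t) * F t) = 0 := by
    intro l hl
    have hne : efun l a ≠ 1 := by
      intro h1
      unfold efun at h1
      rw [Complex.exp_eq_one_iff] at h1
      obtain ⟨n, hn⟩ := h1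
      refine hΛ₁ l hl ⟨n, ?_⟩
      have hpi : (2 * (Real.pi : ℂ) * Complex.I) ≠ 0 :=
        mul_ne_zero (mul_ne_zero two_ne_zero
          (Complex.ofReal_ne_zero.2 Real.pi_ne_zero)) Complex.I_ne_zero
      have hn' : ((l : ℂ) * a) * (2 * (Real.pi : ℂ) * Complex.I)
          = (n : ℂ) * (2 * (Real.pi : ℂ) * Complex.I) := by
        rw [← hn]; ring
      have h2 := mul_right_cancel₀ hpi hn'
      have h3 : l * a = (n : ℝ) := by exact_mod_cast h2
      rw [eq_div_iff ha]
      exact h3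
    have hGz : (∫ t in S₂, (starRingEnd ℂ) (efun l t) * (F t + T.indicator Fa t)) = 0 := by
      refine integral_eq_zero_of_ae ?_
      filter_upwards [hG0] with t ht
      have ht' : F t + T.indicator Fa t = 0 := ht
      simp [ht']
    rw [hsplit l] at hGz
    have horthl := horth l (Or.inl hl)
    have hc : (starRingEnd ℂ) (efun l a) ≠ 1 := by
      intro h
      apply hne
      have := congrArg (starRingEnd ℂ) h
      simpa using this
    have hfac : (1 - (starRingEnd ℂ) (efun l a))
        * (∫ t in S₁, (starRingEnd ℂ) (efun l t) * F t) = 0 := by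
      linear_combination horthl - hGz
    exact (mul_eq_zero.1 hfac).resolve_left (sub_ne_zero.2 fun h => hc h.symm)
  -- Step 3
  have hF1ae : F =ᵐ[volume.restrict S₁] 0 := complete_ae S₁ Λ₁ hS₁b h₁ F hF1mem hI1
  have hFaae : Fa =ᵐ[volume.restrict T] 0 := by
    have hcomp := ae_eq_comp (μ := volume.restrict T) hmp.measurable.aemeasurable
      (g := F) (g' := 0) (by rw [hmp.map_eq]; exact hF1ae)
    exact hcomp
  have hind0 : T.indicator Fa =ᵐ[volume.restrict S₂] 0 := by
    have hsplitS2 : volume.restrict S₂ = volume.restrict T + volume.restrict (S₂ \ T) := by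
      rw [← Measure.restrict_union disjoint_sdiff_right (hS₂m.diff hTm), union_diff_cancel hsub]
    rw [Filter.EventuallyEq, hsplitS2, ae_add_measure_iff]
    constructor
    · exact (indicator_ae_eq_restrict hTm).trans hFaae
    · filter_upwards [ae_restrict_mem (hS₂m.diff hTm)] with s hs
      simp [Set.indicator_of_notMem hs.2]
  have hF2ae : F =ᵐ[volume.restrict S₂] 0 := by
    filter_upwards [hG0, hind0] with s h1 h2
    have hh1 : F s + T.indicator Fa s = 0 := h1
    have hh2 : T.indicator Fa s = 0 := h2
    show F s = 0
    linear_combination hh1 - hh2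
  have hFUae : F =ᵐ[volume.restrict (S₁ ∪ S₂)] 0 := by
    rw [Filter.EventuallyEq, Measure.restrict_union hdisj hS₂m, ae_add_measure_iff]
    exact ⟨hF1ae, hF2ae⟩
  exact Lp.eq_zero_iff_ae_eq_zero.2 (hfF.trans hFUae)
end

section
/- Let S₁, S₂ ⊂ ℝ be disjoint bounded measurable sets of positive Lebesgue measure, and let K, N ∈ ℕ be such that S₁ + k/N ⊆ S₂ for every k = 1, 2, …, K. Let c₁, c₂, …, c_K ∈ [0, N) be distinct real numbers. Suppose there exist sets Λ₁ ⊆ ℝ \ ⋃_{k=1}^{K}(Nℤ + c_k) and Λ₂ ⊆ ⋃_{k=1}^{K}(Nℤ + c_k) with dist(Λ₁, ⋃_{k=1}^{K}(Nℤ + c_k)) > 0, such that E(Λ₁) is complete in L²(S₁) and E(Λ₂) is complete in L²(S₂). Then E(Λ₁ ∪ Λ₂) is complete in L²(S₁ ∪ S₂). -/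
open MeasureTheory Set

open Complex

noncomputable def eC (l t : ℝ) : ℂ := Complex.exp (2 * Real.pi * Complex.I * l * t)

lemma eC_norm (l t : ℝ) : ‖eC l t‖ = 1 := by
  rw [eC, Complex.norm_exp]
  have : (2 * ↑Real.pi * Complex.I * ↑l * ↑t).re = 0 := by simp
  simp [this]

lemma eC_cont (l : ℝ) : Continuous (eC l) := by unfold eC; fun_prop

lemma finMeas {S : Set ℝ} (hb : Bornology.IsBounded S) :
    IsFiniteMeasure (volume.restrict S) := by
  constructor
  rw [Measure.restrict_apply_univ]
  exact hb.measure_lt_top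

lemma memℒp_exp {S : Set ℝ} (hb : Bornology.IsBounded S) (l : ℝ) :
    MemLp (fun t : ℝ => Complex.exp (2 * Real.pi * Complex.I * l * t)) 2 (volume.restrict S) := by
  have := finMeas hb
  apply MemLp.of_bound ((Continuous.aestronglyMeasurable (by fun_prop))) 1
  filter_upwards with t
  exact le_of_eq (eC_norm l t)

open Classical in
lemma expLp_coe {S : Set ℝ} (hb : Bornology.IsBounded S) (l : ℝ) :
    (expLp S l : ℝ → ℂ) =ᵐ[volume.restrict S] fun t : ℝ => eC l t := by
  rw [expLp, dif_pos (memℒp_exp hb l)]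
  exact MemLp.coeFn_toLp _

lemma inner_expLp {S : Set ℝ} (hb : Bornology.IsBounded S) (l : ℝ)
    (h : Lp ℂ 2 (volume.restrict S)) :
    (inner ℂ h (expLp S l) : ℂ) =
      ∫ t, (starRingEnd ℂ) (h t) * eC l t ∂(volume.restrict S) := by
  rw [MeasureTheory.L2.inner_def]
  apply integral_congr_ae
  filter_upwards [expLp_coe hb l] with t ht
  rw [ht]; exact RCLike.inner_apply' _ _

lemma eq_zero_of_orth {S Λ : Set ℝ} (hC : ExpComplete S Λ)
    (h : Lp ℂ 2 (volume.restrict S))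
    (horth : ∀ l ∈ Λ, (inner ℂ h (expLp S l) : ℂ) = 0) : h = 0 := by
  have h2 : (Submodule.span ℂ (expLp S '' Λ))ᗮ = ⊥ :=
    (Submodule.topologicalClosure_eq_top_iff).mp hC
  have hmem : h ∈ (Submodule.span ℂ (expLp S '' Λ))ᗮ := by
    rw [Submodule.mem_orthogonal]
    intro u hu
    induction hu using Submodule.span_induction with
    | mem x hx =>
        obtain ⟨l, hl, rfl⟩ := hx
        rw [← inner_conj_symm, horth l hl, map_zero]
    | zero => simp
    | add x y _ _ hx hy => rw [inner_add_left, hx, hy, add_zero]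
    | smul a x _ hx => rw [inner_smul_left, hx, mul_zero]
  rw [h2] at hmem
  simpa using hmem

lemma expComplete_of {S Λ : Set ℝ}
    (h : ∀ f : Lp ℂ 2 (volume.restrict S),
      (∀ l ∈ Λ, (inner ℂ f (expLp S l) : ℂ) = 0) → f = 0) :
    ExpComplete S Λ := by
  rw [ExpComplete, Submodule.topologicalClosure_eq_top_iff, Submodule.eq_bot_iff]
  intro f hf
  apply h
  intro l hl
  have hm : expLp S l ∈ Submodule.span ℂ (expLp S '' Λ) :=
    Submodule.subset_span ⟨l, hl, rfl⟩
  have h0 := (Submodule.mem_orthogonal _ _).mp hf _ hm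
  rw [← inner_conj_symm, h0, map_zero]

lemma vanderSolve {K : ℕ} (ω : Fin K → ℂ) (hinj : Function.Injective ω)
    (hne : ∀ j, ω j ≠ 0) :
    ∃ a : Fin K → ℂ, ∀ j, ∑ k : Fin K, a k * ω j ^ ((k : ℕ) + 1) = 1 := by
  set M : Matrix (Fin K) (Fin K) ℂ := Matrix.of fun j k => ω j ^ ((k : ℕ) + 1) with hM
  have hdet : M.det ≠ 0 := by
    have h1 : M = Matrix.of fun j k => ω j * Matrix.vandermonde ω j k := by
      ext j k; simp [hM, Matrix.vandermonde, pow_succ, mul_comm]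
    rw [h1, Matrix.det_mul_column]
    apply mul_ne_zero
    · exact Finset.prod_ne_zero_iff.mpr fun j _ => hne j
    · rw [Matrix.det_vandermonde]
      apply Finset.prod_ne_zero_iff.mpr
      intro i _
      apply Finset.prod_ne_zero_iff.mpr
      intro j hj
      exact sub_ne_zero.mpr fun h => (Finset.mem_Ioi.mp hj).ne' (hinj h)
  refine ⟨M⁻¹.mulVec 1, fun j => ?_⟩
  have h2 : M.mulVec (M⁻¹.mulVec 1) = 1 := by
    rw [Matrix.mulVec_mulVec, Matrix.mul_nonsing_inv _ (isUnit_iff_ne_zero.mpr hdet),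
      Matrix.one_mulVec]
  have h3 := congrFun h2 j
  simp only [Matrix.mulVec, dotProduct, hM, Matrix.of_apply, Pi.one_apply] at h3
  rw [← h3]
  exact Finset.sum_congr rfl fun k _ => mul_comm _ _

lemma polyRoots {K : ℕ} (a : Fin K → ℂ) (ω : Fin K → ℂ) (hinj : Function.Injective ω)
    (hroots : ∀ j, ∑ k : Fin K, a k * ω j ^ ((k : ℕ) + 1) = 1)
    (z : ℂ) (hz : ∑ k : Fin K, a k * z ^ ((k : ℕ) + 1) = 1) :
    ∃ j, z = ω j := by
  classical
  by_contra hcon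
  push_neg at hcon
  set p : Polynomial ℂ :=
    (∑ k : Fin K, Polynomial.C (a k) * Polynomial.X ^ ((k : ℕ) + 1)) - Polynomial.C 1 with hp
  have hdeg : p.natDegree ≤ K := by
    refine (Polynomial.natDegree_sub_le _ _).trans (max_le ?_ (by simp))
    refine Polynomial.natDegree_sum_le_of_forall_le _ _ fun k _ => ?_
    exact (Polynomial.natDegree_C_mul_le _ _).trans (by simp [Nat.succ_le_of_lt k.2])
  have heval : ∀ w : ℂ, (∑ k : Fin K, a k * w ^ ((k : ℕ) + 1) = 1) → p.eval w = 0 := by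
    intro w hw
    simp [hp, Polynomial.eval_finset_sum, hw]
  set F : Option (Fin K) → ℂ := fun o => o.elim z ω with hF
  have hFinj : Function.Injective F := by
    intro o₁ o₂ h
    match o₁, o₂ with
    | none, none => rfl
    | none, some j => exact absurd h (hcon j)
    | some j, none => exact absurd h.symm (hcon j)
    | some j₁, some j₂ => exact congrArg some (hinj h)
  have hzero : p = 0 := by
    refine p.eq_zero_of_natDegree_lt_card_of_eval_eq_zero hFinj (fun o => ?_) ?_
    · match o with
      | none => exact heval z hz
      | some j => exact heval (ω j) (hroots j)
    · simpa using Nat.lt_succ_of_le hdeg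
  have hne : p.eval 0 = -1 := by simp [hp, Polynomial.eval_finset_sum]
  rw [hzero] at hne
  simp at hne

lemma shift_integral (g : ℝ → ℂ) (s l : ℝ) :
    ∫ t, g (t - s) * eC l t = eC l s * ∫ t, g t * eC l t := by
  have key : ∀ t : ℝ, g (t - s) * eC l t
      = (fun u => g u * eC l u * eC l s) (t - s) := by
    intro t
    simp only [eC]
    rw [mul_assoc (g (t - s)), ← Complex.exp_add]
    congr 2
    push_cast
    ring_nf
  rw [integral_congr_ae (Filter.Eventually.of_forall key),
    integral_sub_right_eq_self (fun u => g u * eC l u * eC l s) s]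
  rw [← integral_const_mul]
  congr 1; ext u; ring

lemma eC_pow (l : ℝ) (N k : ℕ) :
    eC l (((k + 1 : ℕ) : ℝ) / N) = eC l (1 / N) ^ (k + 1) := by
  rw [eC, eC, ← Complex.exp_nat_mul]
  congr 1
  push_cast
  ring

lemma eC_root {N : ℕ} (hN : 0 < N) (n : ℤ) (cj : ℝ) :
    eC ((N : ℝ) * n + cj) (1 / N) = eC cj (1 / N) := by
  have hN' : (N : ℂ) ≠ 0 := Nat.cast_ne_zero.mpr hN.ne'
  rw [eC, eC, Complex.exp_eq_exp_iff_exists_int]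
  refine ⟨n, ?_⟩
  push_cast
  field_simp
  ring

lemma eC_div_eq {N : ℕ} (hN : 0 < N) {x y : ℝ} (h : eC x (1 / N) = eC y (1 / N)) :
    ∃ n : ℤ, x = N * n + y := by
  obtain ⟨n, hn⟩ := Complex.exp_eq_exp_iff_exists_int.mp h
  refine ⟨n, ?_⟩
  have hN' : (N : ℂ) ≠ 0 := Nat.cast_ne_zero.mpr hN.ne'
  have hne : (2 * (Real.pi : ℂ) * Complex.I) ≠ 0 := by
    simp [Real.pi_ne_zero, Complex.I_ne_zero]
  have h3 : (2 * (Real.pi : ℂ) * Complex.I) * (x : ℂ)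
      = (2 * (Real.pi : ℂ) * Complex.I) * ((N : ℂ) * n + y) := by
    push_cast at hn
    field_simp at hn
    linear_combination (2 * (Real.pi : ℂ) * Complex.I) * hn
  exact_mod_cast mul_left_cancel₀ hne h3

lemma memℒp_conj {μ : Measure ℝ} {f : ℝ → ℂ} (h : MemLp f 2 μ) :
    MemLp (fun t => (starRingEnd ℂ) (f t)) 2 μ := by
  refine ⟨Complex.continuous_conj.comp_aestronglyMeasurable h.1, ?_⟩
  have heq : eLpNorm (fun t => (starRingEnd ℂ) (f t)) 2 μ = eLpNorm f 2 μ := by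
    apply eLpNorm_congr_norm_ae
    filter_upwards with t
    simp
  rw [heq]; exact h.2

lemma integrable_mul_eC {μ : Measure ℝ} {g : ℝ → ℂ} (hg : Integrable g μ) (l : ℝ) :
    Integrable (fun t => g t * eC l t) μ := by
  have := hg.bdd_mul (c := 1) (eC_cont l).aestronglyMeasurable
    (Filter.Eventually.of_forall fun x => le_of_eq (eC_norm l x))
  apply this.congr
  filter_upwards with t
  ring

lemma expand_integral {K : ℕ} (G₁ G₂ : ℝ → ℂ) (a : Fin K → ℂ) (s : Fin K → ℝ)
    (hG₁ : Integrable G₁ volume) (hG₂ : Integrable G₂ volume) (l : ℝ) :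
    ∫ t, (G₂ t + ∑ k : Fin K, a k * G₁ (t - s k)) * eC l t
      = (∫ t, G₂ t * eC l t)
        + ∑ k : Fin K, a k * (eC l (s k) * ∫ t, G₁ t * eC l t) := by
  have htr : ∀ k : Fin K, Integrable (fun t => G₁ (t - s k)) volume := by
    intro k
    have := (memLp_one_iff_integrable.mpr hG₁).comp_measurePreserving
      (measurePreserving_sub_right volume (s k))
    exact memLp_one_iff_integrable.mp this
  have step1 : ∫ t, (G₂ t + ∑ k : Fin K, a k * G₁ (t - s k)) * eC l t
      = ∫ t, (G₂ t * eC l t + ∑ k : Fin K, a k * (G₁ (t - s k) * eC l t)) := by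
    congr 1
    funext t
    rw [add_mul, Finset.sum_mul]
    congr 1
    exact Finset.sum_congr rfl fun k _ => by ring
  rw [step1, integral_add (integrable_mul_eC hG₂ l)
      (integrable_finset_sum _ fun k _ => ((integrable_mul_eC (htr k) l).const_mul _)),
    integral_finset_sum _ fun k _ => ((integrable_mul_eC (htr k) l).const_mul _)]
  congr 1
  refine Finset.sum_congr rfl fun k _ => ?_
  rw [integral_const_mul, shift_integral]
theorem statement_4
    (S₁ S₂ : Set ℝ) (hS₁m : MeasurableSet S₁) (hS₂m : MeasurableSet S₂)
    (hS₁b : Bornology.IsBounded S₁) (hS₂b : Bornology.IsBounded S₂)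
    (hS₁pos : 0 < volume S₁) (hS₂pos : 0 < volume S₂)
    (hdisj : Disjoint S₁ S₂)
    (K N : ℕ) (hK : 0 < K) (hN : 0 < N)
    (hsub : ∀ k : ℕ, 1 ≤ k → k ≤ K → (fun x => x + (k : ℝ) / N) '' S₁ ⊆ S₂)
    (c : Fin K → ℝ) (hc : Function.Injective c) (hc' : ∀ k, c k ∈ Set.Ico (0 : ℝ) N)
    (Λ₁ Λ₂ : Set ℝ)
    (hΛ₁ : ∀ x ∈ Λ₁, ¬ ∃ (k : Fin K) (n : ℤ), x = N * n + c k)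
    (hΛ₂ : ∀ x ∈ Λ₂, ∃ (k : Fin K) (n : ℤ), x = N * n + c k)
    (hdist : ∃ d : ℝ, 0 < d ∧ ∀ x ∈ Λ₁, ∀ (k : Fin K) (n : ℤ), d ≤ |x - (N * n + c k)|)
    (h₁ : ExpComplete S₁ Λ₁) (h₂ : ExpComplete S₂ Λ₂) :
    ExpComplete (S₁ ∪ S₂) (Λ₁ ∪ Λ₂) := by
  classical
  have hSm : MeasurableSet (S₁ ∪ S₂) := hS₁m.union hS₂m
  have hSb : Bornology.IsBounded (S₁ ∪ S₂) := hS₁b.union hS₂b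
  haveI : IsFiniteMeasure (volume.restrict (S₁ ∪ S₂)) := finMeas hSb
  haveI : IsFiniteMeasure (volume.restrict S₁) := finMeas hS₁b
  haveI : IsFiniteMeasure (volume.restrict S₂) := finMeas hS₂b
  apply expComplete_of
  intro f hf
  set g : ℝ → ℂ := fun t => (starRingEnd ℂ) (f t) with hgdef
  set G : ℝ → ℂ := (S₁ ∪ S₂).indicator g with hGdef
  have hgmem : MemLp g 2 (volume.restrict (S₁ ∪ S₂)) := memℒp_conj (Lp.memLp f)
  have hGmem : MemLp G 2 volume := (memLp_indicator_iff_restrict hSm).mpr hgmem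
  have hGint : Integrable G volume :=
    (integrable_indicator_iff hSm).mpr (hgmem.integrable one_le_two)
  -- orthogonality in integral form
  have hG0 : ∀ l ∈ Λ₁ ∪ Λ₂, ∫ t, G t * eC l t = 0 := by
    intro l hl
    have h1 := hf l hl
    rw [inner_expLp hSb] at h1
    rw [← h1, ← integral_indicator hSm]
    congr 1
    funext t
    exact (Set.indicator_mul_left (i := t) (S₁ ∪ S₂) g (fun u => eC l u)).symm
  set G₁ : ℝ → ℂ := S₁.indicator G with hG₁def
  set G₂ : ℝ → ℂ := S₂.indicator G with hG₂def
  have hG₁mem : MemLp G₁ 2 volume := hGmem.indicator hS₁m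
  have hG₁int : Integrable G₁ volume := hGint.indicator hS₁m
  have hG₂int : Integrable G₂ volume := hGint.indicator hS₂m
  have hsplit : ∀ t, G t = G₁ t + G₂ t := by
    intro t
    by_cases h1 : t ∈ S₁
    · have h2 : t ∉ S₂ := fun h2 => Set.disjoint_left.mp hdisj h1 h2
      simp [hG₁def, hG₂def, hGdef, Set.indicator_of_mem, Set.indicator_of_notMem, h1, h2,
        Set.mem_union]
    · by_cases h2 : t ∈ S₂
      · simp [hG₁def, hG₂def, hGdef, Set.indicator_of_mem, Set.indicator_of_notMem, h1, h2,
          Set.mem_union]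
      · have h3 : t ∉ S₁ ∪ S₂ := fun h => h.elim h1 h2
        simp [hG₁def, hG₂def, hGdef, Set.indicator_of_notMem, h1, h2, h3]
  have hGsum : ∀ l : ℝ, (∫ t, G t * eC l t)
      = (∫ t, G₁ t * eC l t) + ∫ t, G₂ t * eC l t := by
    intro l
    rw [← integral_add (integrable_mul_eC hG₁int l) (integrable_mul_eC hG₂int l)]
    congr 1
    funext t
    rw [hsplit t]
    ring
  -- roots of unity and Vandermonde coefficients
  set ω : Fin K → ℂ := fun j => eC (c j) (1 / N) with hωdef
  have hNR : (0 : ℝ) < N := by exact_mod_cast hN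
  have hωinj : Function.Injective ω := by
    intro j j' h
    simp only [hωdef] at h
    obtain ⟨n, hn⟩ := eC_div_eq hN h
    have hj := hc' j
    have hj' := hc' j'
    have h1 : (-1 : ℝ) < (n : ℝ) := by nlinarith [hj.1, hj.2, hj'.1, hj'.2]
    have h2 : ((n : ℝ)) < 1 := by nlinarith [hj.1, hj.2, hj'.1, hj'.2]
    have h1' : (-1 : ℤ) < n := by exact_mod_cast h1
    have h2' : n < 1 := by exact_mod_cast h2
    have hn0 : n = 0 := by omega
    apply hc
    rw [hn0] at hn
    simpa using hn
  have hωne : ∀ j, ω j ≠ 0 := by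
    intro j
    simp [hωdef, eC, Complex.exp_ne_zero]
  obtain ⟨a, ha⟩ := vanderSolve ω hωinj hωne
  -- the shifts
  set s : Fin K → ℝ := fun k => (((k : ℕ) + 1 : ℕ) : ℝ) / N with hsdef
  have hshift : ∀ k : Fin K, ∀ t : ℝ, t - s k ∈ S₁ → t ∈ S₂ := by
    intro k t ht
    have hk1 : 1 ≤ (k : ℕ) + 1 := Nat.succ_le_succ (Nat.zero_le _)
    have hk2 : (k : ℕ) + 1 ≤ K := Nat.succ_le_of_lt k.2
    apply hsub ((k : ℕ) + 1) hk1 hk2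
    refine ⟨t - s k, ht, ?_⟩
    simp only [hsdef]
    push_cast
    ring
  -- the folded function H
  set H : ℝ → ℂ := fun t => G₂ t + ∑ k : Fin K, a k * G₁ (t - s k) with hHdef
  have hHmem : MemLp H 2 volume := by
    apply MemLp.add (hGmem.indicator hS₂m)
    apply memLp_finset_sum
    intro k _
    exact (hG₁mem.comp_measurePreserving (measurePreserving_sub_right volume (s k))).const_mul
      (a k)
  have hHint : Integrable H volume := by
    apply Integrable.add hG₂int
    apply integrable_finset_sum
    intro k _
    exact (memLp_one_iff_integrable.mp
      ((memLp_one_iff_integrable.mpr hG₁int).comp_measurePreserving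
        (measurePreserving_sub_right volume (s k)))).const_mul (a k)
  have hHsupp : ∀ t, t ∉ S₂ → H t = 0 := by
    intro t ht
    have h1 : G₂ t = 0 := by
      simp only [hG₂def]
      exact Set.indicator_of_notMem ht _
    have h2 : ∀ k : Fin K, G₁ (t - s k) = 0 := by
      intro k
      simp only [hG₁def]
      exact Set.indicator_of_notMem (fun hmem => ht (hshift k t hmem)) _
    simp only [hHdef, h1, h2, mul_zero, Finset.sum_const_zero, add_zero]
  -- key expansion of ∫ H e_l
  have hkey : ∀ l : ℝ, ∫ t, H t * eC l t
      = (∫ t, G₂ t * eC l t)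
        + (∑ k : Fin K, a k * (eC l (1 / N)) ^ ((k : ℕ) + 1)) * ∫ t, G₁ t * eC l t := by
    intro l
    have := expand_integral G₁ G₂ a s hG₁int hG₂int l
    rw [hHdef, this, Finset.sum_mul]
    congr 1
    refine Finset.sum_congr rfl fun k _ => ?_
    have hph : eC l (s k) = eC l (1 / N) ^ ((k : ℕ) + 1) := by
      simp only [hsdef]
      exact eC_pow l N (k : ℕ)
    rw [hph]
    ring
  -- H is orthogonal to E(Λ₂)
  have hH0 : ∀ l ∈ Λ₂, ∫ t, H t * eC l t = 0 := by
    intro l hl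
    obtain ⟨j, n, rfl⟩ := hΛ₂ l hl
    rw [hkey]
    have h1 : (∑ k : Fin K, a k * (eC ((N : ℝ) * n + c j) (1 / N)) ^ ((k : ℕ) + 1)) = 1 := by
      rw [eC_root hN n (c j)]
      simpa [hωdef] using ha j
    rw [h1, one_mul]
    have h2 := hG0 _ (Set.mem_union_right _ hl)
    rw [hGsum] at h2
    rw [add_comm]
    exact h2
  -- conclude H = 0 a.e.
  have hHcmem : MemLp (fun t => (starRingEnd ℂ) (H t)) 2 (volume.restrict S₂) :=
    memℒp_conj (hHmem.restrict _)
  have hHLp0 : hHcmem.toLp _ = 0 := by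
    apply eq_zero_of_orth h₂
    intro l hl
    rw [inner_expLp hS₂b]
    have e1 : ∫ t, (starRingEnd ℂ) ((hHcmem.toLp _ : Lp ℂ 2 (volume.restrict S₂)) t) * eC l t
          ∂(volume.restrict S₂)
        = ∫ t, H t * eC l t ∂(volume.restrict S₂) := by
      apply integral_congr_ae
      filter_upwards [hHcmem.coeFn_toLp] with t ht
      rw [ht]
      simp
    rw [e1]
    have e2 : ∫ t, H t * eC l t ∂(volume.restrict S₂) = ∫ t, H t * eC l t := by
      rw [← integral_indicator hS₂m]
      congr 1
      funext t
      by_cases ht : t ∈ S₂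
      · exact Set.indicator_of_mem ht _
      · rw [Set.indicator_of_notMem ht, hHsupp t ht, zero_mul]
    rw [e2]
    exact hH0 l hl
  have hHae2 : ∀ᵐ t ∂(volume.restrict S₂), H t = 0 := by
    have h1 := (Lp.eq_zero_iff_ae_eq_zero).mp hHLp0
    filter_upwards [h1.symm.trans hHcmem.coeFn_toLp] with t ht
    have : (starRingEnd ℂ) (H t) = 0 := ht.symm
    simpa using congrArg (starRingEnd ℂ) this
  have hHae0 : ∀ᵐ t, H t = 0 := by
    have h1 : (volume.restrict S₂) {t | ¬ H t = 0} = 0 := ae_iff.mp hHae2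
    rw [Measure.restrict_apply' hS₂m] at h1
    have hsubset : {t | ¬ H t = 0} ⊆ {t | ¬ H t = 0} ∩ S₂ := by
      intro t ht
      exact ⟨ht, by_contra fun h => ht (hHsupp t h)⟩
    have : volume {t | ¬ H t = 0} = 0 :=
      le_antisymm ((measure_mono hsubset).trans h1.le) zero_le
    exact ae_iff.mpr this
  -- deduce that ∫ G₁ e_l = 0 for l ∈ Λ₁
  have hA : ∀ l ∈ Λ₁, ∫ t, G₁ t * eC l t = 0 := by
    intro l hl
    have hH0l : ∫ t, H t * eC l t = 0 := by
      apply integral_eq_zero_of_ae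
      filter_upwards [hHae0] with t ht
      rw [ht, zero_mul]
      rfl
    rw [hkey l] at hH0l
    have hG0l := hG0 l (Set.mem_union_left _ hl)
    rw [hGsum] at hG0l
    by_cases hP : (∑ k : Fin K, a k * (eC l (1 / N)) ^ ((k : ℕ) + 1)) = 1
    · exfalso
      obtain ⟨j, hj⟩ := polyRoots a ω hωinj ha _ hP
      simp only [hωdef] at hj
      obtain ⟨n, hn⟩ := eC_div_eq hN hj
      exact hΛ₁ l hl ⟨j, n, hn⟩
    · have hfac : ((∑ k : Fin K, a k * (eC l (1 / N)) ^ ((k : ℕ) + 1)) - 1)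
          * (∫ t, G₁ t * eC l t) = 0 := by
        linear_combination hH0l - hG0l
      rcases mul_eq_zero.mp hfac with h | h
      · exact absurd (by linear_combination h) hP
      · exact h
  -- conclude G₁ = 0 a.e.
  have hG₁cmem : MemLp (fun t => (starRingEnd ℂ) (G₁ t)) 2 (volume.restrict S₁) :=
    memℒp_conj (hG₁mem.restrict _)
  have hG₁Lp0 : hG₁cmem.toLp _ = 0 := by
    apply eq_zero_of_orth h₁
    intro l hl
    rw [inner_expLp hS₁b]
    have e1 : ∫ t, (starRingEnd ℂ) ((hG₁cmem.toLp _ : Lp ℂ 2 (volume.restrict S₁)) t) * eC l t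
          ∂(volume.restrict S₁)
        = ∫ t, G₁ t * eC l t ∂(volume.restrict S₁) := by
      apply integral_congr_ae
      filter_upwards [hG₁cmem.coeFn_toLp] with t ht
      rw [ht]
      simp
    rw [e1]
    have e2 : ∫ t, G₁ t * eC l t ∂(volume.restrict S₁) = ∫ t, G₁ t * eC l t := by
      rw [← integral_indicator hS₁m]
      congr 1
      funext t
      by_cases ht : t ∈ S₁
      · exact Set.indicator_of_mem ht _
      · rw [Set.indicator_of_notMem ht]
        have : G₁ t = 0 := by
          simp only [hG₁def]
          exact Set.indicator_of_notMem ht _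
        rw [this, zero_mul]
    rw [e2]
    exact hA l hl
  have hG₁supp : ∀ t, t ∉ S₁ → G₁ t = 0 := by
    intro t ht
    simp only [hG₁def]
    exact Set.indicator_of_notMem ht _
  have hG₁ae0 : ∀ᵐ t, G₁ t = 0 := by
    have h1 := (Lp.eq_zero_iff_ae_eq_zero).mp hG₁Lp0
    have hae2 : ∀ᵐ t ∂(volume.restrict S₁), G₁ t = 0 := by
      filter_upwards [h1.symm.trans hG₁cmem.coeFn_toLp] with t ht
      have : (starRingEnd ℂ) (G₁ t) = 0 := ht.symm
      simpa using congrArg (starRingEnd ℂ) this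
    have h2 : (volume.restrict S₁) {t | ¬ G₁ t = 0} = 0 := ae_iff.mp hae2
    rw [Measure.restrict_apply' hS₁m] at h2
    have hsubset : {t | ¬ G₁ t = 0} ⊆ {t | ¬ G₁ t = 0} ∩ S₁ := by
      intro t ht
      exact ⟨ht, by_contra fun h => ht (hG₁supp t h)⟩
    have : volume {t | ¬ G₁ t = 0} = 0 :=
      le_antisymm ((measure_mono hsubset).trans h2.le) zero_le
    exact ae_iff.mpr this
  -- translates of G₁ vanish a.e., hence G₂ = 0 a.e.
  have htransl : ∀ k : Fin K, ∀ᵐ t, G₁ (t - s k) = 0 := by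
    intro k
    have hq := (measurePreserving_sub_right volume (s k)).quasiMeasurePreserving
    have := hq.ae_eq_comp (g := G₁) (g' := 0) hG₁ae0
    exact this
  have hall : ∀ᵐ t, ∀ k : Fin K, G₁ (t - s k) = 0 := ae_all_iff.mpr htransl
  have hG₂ae0 : ∀ᵐ t, G₂ t = 0 := by
    filter_upwards [hHae0, hall] with t h1 h2
    have h3 : G₂ t + ∑ k : Fin K, a k * G₁ (t - s k) = 0 := h1
    simpa [h2] using h3
  have hGae0 : ∀ᵐ t, G t = 0 := by
    filter_upwards [hG₁ae0, hG₂ae0] with t h1 h2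
    rw [hsplit t, h1, h2, add_zero]
  -- finish
  rw [Lp.eq_zero_iff_ae_eq_zero]
  have hres : ∀ᵐ t ∂(volume.restrict (S₁ ∪ S₂)), G t = 0 :=
    hGae0.filter_mono (ae_mono Measure.restrict_le_self)
  filter_upwards [hres, ae_restrict_mem hSm] with t h1 h2
  have h4 : G t = g t := Set.indicator_of_mem h2 g
  rw [h4] at h1
  simp only [hgdef] at h1
  simpa using congrArg (starRingEnd ℂ) h1
end

section
/- Let S₁, S₂ ⊂ ℝ be disjoint bounded measurable sets of positive Lebesgue measure with S₁ + a ⊆ S₂ for some real number a ≠ 0. Suppose there exist sets Λ₁ ⊆ ℝ \ (1/a)ℤ and Λ₂ ⊆ (1/a)ℤ such that E(Λ₁ ∪ Λ₂) is complete in L²(S₁ ∪ S₂). Then E(Λ₁) is complete in L²(S₁). -/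
open MeasureTheory Set

open scoped ComplexConjugate

noncomputable def efun (l : ℝ) : ℝ → ℂ :=
  fun t : ℝ => Complex.exp (2 * Real.pi * Complex.I * l * t)

lemma efun_norm (l t : ℝ) : ‖efun l t‖ = 1 := by
  have h : (2 * (Real.pi : ℂ) * Complex.I * l * t) = ((2 * Real.pi * l * t : ℝ) : ℂ) * Complex.I := by
    push_cast; ring
  rw [efun, h]
  exact Complex.norm_exp_ofReal_mul_I _

lemma efun_continuous (l : ℝ) : Continuous (efun l) := by
  unfold efun
  exact Complex.continuous_exp.comp (by continuity)

lemma efun_memLp (S : Set ℝ) (hSb : Bornology.IsBounded S) (l : ℝ) :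
    MemLp (efun l) 2 (volume.restrict S) := by
  haveI : IsFiniteMeasure (volume.restrict S) :=
    ⟨by rw [Measure.restrict_apply_univ]; exact hSb.measure_lt_top⟩
  exact MemLp.of_bound ((efun_continuous l).aestronglyMeasurable) 1
    (ae_of_all _ fun t => (efun_norm l t).le)

lemma expLp_coeFn (S : Set ℝ) (hSb : Bornology.IsBounded S) (l : ℝ) :
    (expLp S l : ℝ → ℂ) =ᵐ[volume.restrict S] efun l := by
  have h := efun_memLp S hSb l
  unfold efun at h
  rw [expLp, dif_pos h]
  exact h.coeFn_toLp

lemma expComplete_iff (S Λ : Set ℝ) :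
    ExpComplete S Λ ↔ ∀ f : Lp ℂ 2 (volume.restrict S),
      (∀ l ∈ Λ, (inner ℂ (expLp S l) f : ℂ) = 0) → f = 0 := by
  rw [ExpComplete, Submodule.topologicalClosure_eq_top_iff]
  constructor
  · intro h f hf
    have hmem : f ∈ (Submodule.span ℂ (expLp S '' Λ))ᗮ := by
      rw [Submodule.mem_orthogonal]
      intro u hu
      induction hu using Submodule.span_induction with
      | mem x hx => obtain ⟨l, hl, rfl⟩ := hx; exact hf l hl
      | zero => simp
      | add x y _ _ hx hy => rw [inner_add_left, hx, hy, add_zero]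
      | smul c x _ hx => rw [inner_smul_left, hx, mul_zero]
    rw [h] at hmem; simpa using hmem
  · intro h
    rw [Submodule.eq_bot_iff]
    intro f hf
    exact h f fun l hl =>
      Submodule.inner_right_of_mem_orthogonal (Submodule.subset_span (Set.mem_image_of_mem _ hl)) hf

theorem statement_6
    (S₁ S₂ : Set ℝ) (hS₁m : MeasurableSet S₁) (hS₂m : MeasurableSet S₂)
    (hS₁b : Bornology.IsBounded S₁) (hS₂b : Bornology.IsBounded S₂)
    (hS₁pos : 0 < volume S₁) (hS₂pos : 0 < volume S₂)
    (hdisj : Disjoint S₁ S₂)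
    (a : ℝ) (ha : a ≠ 0) (hsub : (fun x => x + a) '' S₁ ⊆ S₂)
    (Λ₁ Λ₂ : Set ℝ)
    (hΛ₁ : ∀ x ∈ Λ₁, ¬ ∃ n : ℤ, x = n / a)
    (hΛ₂ : ∀ x ∈ Λ₂, ∃ n : ℤ, x = n / a)
    (hcomp : ExpComplete (S₁ ∪ S₂) (Λ₁ ∪ Λ₂)) :
    ExpComplete S₁ Λ₁ := by
  haveI hfin1 : IsFiniteMeasure (volume.restrict S₁) :=
    ⟨by rw [Measure.restrict_apply_univ]; exact hS₁b.measure_lt_top⟩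
  rw [expComplete_iff]
  intro f hf
  have hfmem : MemLp (⇑f) 2 (volume.restrict S₁) := Lp.memLp f
  set F : ℝ → ℂ := S₁.indicator ⇑f with hFdef
  have hFmem : MemLp F 2 volume := (memLp_indicator_iff_restrict hS₁m).2 hfmem
  have hFint : Integrable F volume :=
    IntegrableOn.integrable_indicator (hfmem.integrable one_le_two) hS₁m
  have hshiftmem : MemLp (fun t => F (t - a)) 2 volume :=
    hFmem.comp_measurePreserving (measurePreserving_sub_right volume a)
  have hshiftint : Integrable (fun t => F (t - a)) volume :=
    ((measurePreserving_sub_right volume a).integrable_comp hFint.aestronglyMeasurable).2 hFint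
  set G : ℝ → ℂ := fun t => F t - F (t - a) with hGdef
  have hGmem : MemLp G 2 volume := hFmem.sub hshiftmem
  have hGU : MemLp G 2 (volume.restrict (S₁ ∪ S₂)) := hGmem.restrict _
  set g : Lp ℂ 2 (volume.restrict (S₁ ∪ S₂)) := hGU.toLp G with hgdef
  have hGzero : ∀ t, t ∉ S₁ ∪ S₂ → G t = 0 := by
    intro t ht
    have h1 : F t = 0 := indicator_of_notMem (fun h => ht (Or.inl h)) _
    have h2 : F (t - a) = 0 := by
      refine indicator_of_notMem (fun h => ?_) _
      exact ht (Or.inr (hsub ⟨t - a, h, by ring⟩))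
    rw [hGdef]
    simp [h1, h2]
  have key : ∀ l : ℝ, (inner ℂ (expLp (S₁ ∪ S₂) l) g : ℂ)
      = (1 - (starRingEnd ℂ) (efun l a)) * (inner ℂ (expLp S₁ l) f : ℂ) := by
    intro l
    have hconjm : AEStronglyMeasurable (fun t => (starRingEnd ℂ) (efun l t)) (volume : Measure ℝ) :=
      ((efun_continuous l).star).aestronglyMeasurable
    have hbdd : ∀ᵐ x ∂(volume : Measure ℝ), ‖(starRingEnd ℂ) (efun l x)‖ ≤ 1 :=
      ae_of_all _ fun x => by rw [RCLike.norm_conj, efun_norm]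
    have hintF : Integrable (fun t => (starRingEnd ℂ) (efun l t) * F t) volume :=
      hFint.bdd_mul hconjm hbdd
    have hintS : Integrable (fun t => (starRingEnd ℂ) (efun l t) * F (t - a)) volume :=
      hshiftint.bdd_mul hconjm hbdd
    have e1 : (inner ℂ (expLp (S₁ ∪ S₂) l) g : ℂ)
        = ∫ t in S₁ ∪ S₂, (starRingEnd ℂ) (efun l t) * G t := by
      rw [L2.inner_def]
      refine integral_congr_ae ?_
      filter_upwards [expLp_coeFn (S₁ ∪ S₂) (hS₁b.union hS₂b) l, hGU.coeFn_toLp] with t h1 h2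
      rw [RCLike.inner_apply, h1, h2, mul_comm]
    have e2 : (∫ t in S₁ ∪ S₂, (starRingEnd ℂ) (efun l t) * G t)
        = ∫ t, (starRingEnd ℂ) (efun l t) * G t := by
      apply setIntegral_eq_integral_of_forall_compl_eq_zero
      intro t ht
      rw [hGzero t ht, mul_zero]
    have e3 : (∫ t, (starRingEnd ℂ) (efun l t) * G t)
        = (∫ t, (starRingEnd ℂ) (efun l t) * F t)
          - ∫ t, (starRingEnd ℂ) (efun l t) * F (t - a) := by
      rw [hGdef]
      simp only [mul_sub]
      exact integral_sub hintF hintS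
    have e4 : (∫ t, (starRingEnd ℂ) (efun l t) * F (t - a))
        = (starRingEnd ℂ) (efun l a) * ∫ t, (starRingEnd ℂ) (efun l t) * F t := by
      have h1 : (fun t : ℝ => (starRingEnd ℂ) (efun l t) * F (t - a))
          = fun t : ℝ => (fun s : ℝ => (starRingEnd ℂ) (efun l (s + a)) * F s) (t - a) := by
        funext t; simp [sub_add_cancel]
      rw [h1, integral_sub_right_eq_self (fun s : ℝ => (starRingEnd ℂ) (efun l (s + a)) * F s) a]
      have h2 : ∀ s : ℝ, (starRingEnd ℂ) (efun l (s + a)) * F s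
          = (starRingEnd ℂ) (efun l a) * ((starRingEnd ℂ) (efun l s) * F s) := by
        intro s
        have h3 : efun l (s + a) = efun l s * efun l a := by
          unfold efun
          rw [← Complex.exp_add]
          push_cast
          ring_nf
        rw [h3, map_mul]; ring
      simp only [h2]
      rw [integral_const_mul]
    have e5 : (∫ t, (starRingEnd ℂ) (efun l t) * F t) = (inner ℂ (expLp S₁ l) f : ℂ) := by
      have h1 : (fun t : ℝ => (starRingEnd ℂ) (efun l t) * F t)
          = S₁.indicator (fun t => (starRingEnd ℂ) (efun l t) * ⇑f t) := by
        funext t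
        rw [hFdef]
        by_cases h : t ∈ S₁
        · simp [indicator_of_mem h]
        · simp [indicator_of_notMem h]
      rw [h1, integral_indicator hS₁m, L2.inner_def]
      refine (integral_congr_ae ?_).symm
      filter_upwards [expLp_coeFn S₁ hS₁b l] with t h2
      rw [RCLike.inner_apply, h2, mul_comm]
    rw [e1, e2, e3, e4, e5, sub_mul, one_mul]
  have hg0 : g = 0 := by
    refine (expComplete_iff _ _).1 hcomp g fun l hl => ?_
    rcases hl with hl | hl
    · rw [key l, hf l hl, mul_zero]
    · obtain ⟨n, rfl⟩ := hΛ₂ l hl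
      rw [key]
      have h1 : efun ((n : ℝ) / a) a = 1 := by
        unfold efun
        have h3 : (2 * (Real.pi : ℂ) * Complex.I * (((n : ℝ) / a : ℝ) : ℂ) * (a : ℂ))
            = (n : ℂ) * (2 * Real.pi * Complex.I) := by
          have ha' : (a : ℂ) ≠ 0 := by exact_mod_cast ha
          push_cast
          field_simp
        rw [h3, Complex.exp_int_mul_two_pi_mul_I]
      rw [h1, map_one, sub_self, zero_mul]
  have hGae : G =ᵐ[volume.restrict (S₁ ∪ S₂)] 0 := by
    have h1 : (⇑g : ℝ → ℂ) =ᵐ[volume.restrict (S₁ ∪ S₂)] G := hGU.coeFn_toLp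
    have h2 : (⇑g : ℝ → ℂ) =ᵐ[volume.restrict (S₁ ∪ S₂)] 0 := by
      rw [hg0]; exact Lp.coeFn_zero ℂ 2 _
    exact h1.symm.trans h2
  have hGS₁ : G =ᵐ[volume.restrict S₁] 0 :=
    ae_restrict_of_ae_restrict_of_subset subset_union_left hGae
  have hf0 : ⇑f =ᵐ[volume.restrict S₁] 0 := by
    filter_upwards [hGS₁, ae_restrict_mem hS₁m] with t htG htS
    have h1 : F t = f t := by rw [hFdef]; exact indicator_of_mem htS _
    have h2 : F (t - a) = 0 := by
      rw [hFdef]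
      refine indicator_of_notMem (fun h => ?_) _
      exact Set.disjoint_left.mp hdisj htS (hsub ⟨t - a, h, by ring⟩)
    have h4 : G t = f t := by rw [hGdef]; simp [h1, h2]
    rw [Pi.zero_apply] at htG ⊢
    rw [← h4, htG]
  exact (Lp.eq_zero_iff_ae_eq_zero).2 hf0
end

section
/- For every real number c with 0 < c < 4 and c ≠ 2, the system E(4ℤ ∪ (4ℤ + c)) is a Riesz basis for L²([0, 1/4) ∪ [1/2, 3/4)). -/
open MeasureTheory Set

open Complex


noncomputable def ee (l t : ℝ) : ℂ := Complex.exp (2 * Real.pi * Complex.I * l * t)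

lemma norm_ee (l t : ℝ) : ‖ee l t‖ = 1 := by
  rw [ee, Complex.norm_exp]
  have : (2 * (Real.pi:ℂ) * Complex.I * l * t).re = 0 := by simp
  rw [this, Real.exp_zero]

lemma ee_mul (l m t : ℝ) : ee l t * ee m t = ee (l + m) t := by
  rw [ee, ee, ee, ← Complex.exp_add]; congr 1; push_cast; ring

lemma conj_ee (l t : ℝ) : (starRingEnd ℂ) (ee l t) = ee (-l) t := by
  rw [ee, ee, ← Complex.exp_conj]
  congr 1
  simp only [map_mul, Complex.conj_I, Complex.conj_ofReal, map_ofNat]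
  push_cast; ring

lemma ee_add_half (n : ℤ) (t : ℝ) : ee (4 * n) (t + 1/2) = ee (4 * n) t := by
  rw [ee, ee]
  have : 2 * (Real.pi:ℂ) * Complex.I * ((4 * (n:ℝ) : ℝ):ℂ) * ((t + 1/2 : ℝ):ℂ)
      = 2 * Real.pi * Complex.I * ((4 * (n:ℝ) : ℝ):ℂ) * t + ((2*n : ℤ) : ℂ) * (2 * Real.pi * Complex.I) := by
    push_cast; ring
  rw [this, Complex.exp_add, Complex.exp_int_mul_two_pi_mul_I, mul_one]

lemma continuous_ee (l : ℝ) : Continuous (ee l) := by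
  unfold ee; fun_prop

lemma ee_ne_zero (l t : ℝ) : ee l t ≠ 0 := Complex.exp_ne_zero _

-- orthogonality on [0, 1/4]
lemma orth_int (k : ℤ) :
    ∫ t in Ioc (0:ℝ) (1/4), ee (4 * k) t = if k = 0 then (1/4 : ℂ) else 0 := by
  have h14 : (0:ℝ) ≤ 1/4 := by norm_num
  rw [← intervalIntegral.integral_of_le h14]
  rcases eq_or_ne k 0 with hk | hk
  · simp [hk, ee]
  · have hc : (2 * Real.pi * Complex.I * ((4 * (k:ℝ) : ℝ):ℂ) : ℂ) ≠ 0 := by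
      have : ((4 * (k:ℝ) : ℝ):ℂ) ≠ 0 := by
        simp only [ne_eq, Complex.ofReal_eq_zero]
        intro h
        have : (k:ℝ) = 0 := by linarith [(by linarith : (4:ℝ) * k = 0)]
        exact hk (by exact_mod_cast this)
      have h2 : (2:ℂ) ≠ 0 := two_ne_zero
      have hpi : ((Real.pi:ℝ):ℂ) ≠ 0 := by
        simp [Complex.ofReal_eq_zero, Real.pi_ne_zero]
      exact mul_ne_zero (mul_ne_zero (mul_ne_zero h2 hpi) Complex.I_ne_zero) this
    have heq : ∀ t : ℝ, ee (4 * k) t = Complex.exp ((2 * Real.pi * Complex.I * ((4 * (k:ℝ) : ℝ):ℂ)) * t) := by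
      intro t; rw [ee]
    simp_rw [heq]
    rw [integral_exp_mul_complex hc]
    have h1 : (2 * Real.pi * Complex.I * ((4 * (k:ℝ) : ℝ):ℂ) : ℂ) * ((1/4 : ℝ):ℂ)
        = (k:ℂ) * (2 * Real.pi * Complex.I) := by push_cast; ring
    rw [if_neg hk, h1, Complex.exp_int_mul_two_pi_mul_I]
    simp


section Basic
variable {S : Set ℝ} (hS : volume S ≠ ⊤)

lemma isFiniteRestrict (hS : volume S ≠ ⊤) : IsFiniteMeasure (volume.restrict S) := by
  constructor
  rw [Measure.restrict_apply_univ]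
  exact hS.lt_top

lemma memLp_ee (hS : volume S ≠ ⊤) (l : ℝ) : MemLp (ee l) 2 (volume.restrict S) := by
  haveI := isFiniteRestrict hS
  exact MemLp.of_bound ((continuous_ee l).aestronglyMeasurable) 1
    (Filter.Eventually.of_forall fun t => le_of_eq (norm_ee l t))

lemma expLp_eq (hS : volume S ≠ ⊤) (l : ℝ) : expLp S l = (memLp_ee hS l).toLp (ee l) := by
  have h : MemLp (fun t : ℝ => Complex.exp (2 * Real.pi * Complex.I * l * t)) 2
      (volume.restrict S) := memLp_ee hS l
  rw [expLp, dif_pos h]; rfl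

lemma coeFn_expLp (hS : volume S ≠ ⊤) (l : ℝ) :
    (expLp S l : ℝ → ℂ) =ᵐ[volume.restrict S] ee l := by
  rw [expLp_eq hS]; exact MemLp.coeFn_toLp _

lemma coeFn_sum_expLp (hS : volume S ≠ ⊤) (F : Finset ℝ) (cc : ℝ → ℂ) :
    ((∑ l ∈ F, cc l • expLp S l : Lp ℂ 2 (volume.restrict S)) : ℝ → ℂ)
      =ᵐ[volume.restrict S] fun t => ∑ l ∈ F, cc l * ee l t := by
  classical
  induction F using Finset.induction_on with
  | empty => simp only [Finset.sum_empty]; exact Lp.coeFn_zero ℂ 2 (volume.restrict S)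
  | @insert a s hl ih =>
    rw [Finset.sum_insert hl]
    filter_upwards [Lp.coeFn_add (cc a • expLp S a) (∑ l ∈ s, cc l • expLp S l),
      Lp.coeFn_smul (cc a) (expLp S a), coeFn_expLp hS a, ih] with t h1 h2 h3 h4
    rw [h1, Finset.sum_insert hl]
    simp only [Pi.add_apply]
    rw [h2, h4]
    simp only [Pi.smul_apply, smul_eq_mul, h3]

-- ‖h‖² as an integral
lemma norm_sq_eq_integral {μ : Measure ℝ} (h : Lp ℂ 2 μ) (g : ℝ → ℂ)
    (hg : (h : ℝ → ℂ) =ᵐ[μ] g) :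
    ‖h‖ ^ 2 = ∫ t, ‖g t‖ ^ 2 ∂μ := by
  have h1 : ‖h‖ ^ 2 = RCLike.re (inner ℂ h h : ℂ) := (inner_self_eq_norm_sq (𝕜 := ℂ) h).symm
  rw [h1, MeasureTheory.L2.inner_def, ← integral_re (L2.integrable_inner h h)]
  apply integral_congr_ae
  filter_upwards [hg] with t ht
  rw [inner_self_eq_norm_sq (𝕜 := ℂ), ht]

end Basic

-- orthogonal expansion over [0,1/4]
lemma orth_expansion (G : Finset ℝ) (d : ℝ → ℂ) (ρ : ℝ → ℝ)
    (hρ : ∀ l ∈ G, ∀ m ∈ G, l ≠ m → ∃ k : ℤ, k ≠ 0 ∧ ρ m - ρ l = 4 * k) :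
    ∫ t in Ioc (0:ℝ) (1/4), ‖∑ l ∈ G, d l * ee (ρ l) t‖ ^ 2
      = (1/4) * ∑ l ∈ G, ‖d l‖ ^ 2 := by
  classical
  set A : ℝ → ℂ := fun t => ∑ l ∈ G, d l * ee (ρ l) t with hA
  have hAc : Continuous A := continuous_finset_sum _ fun l _ => continuous_const.mul (continuous_ee _)
  have key : ∫ t in Ioc (0:ℝ) (1/4), (starRingEnd ℂ) (A t) * A t
      = (((1/4) * ∑ l ∈ G, ‖d l‖ ^ 2 : ℝ) : ℂ) := by
    have expand : ∀ t, (starRingEnd ℂ) (A t) * A t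
        = ∑ l ∈ G, ∑ m ∈ G, ((starRingEnd ℂ) (d l) * d m) * ee (ρ m - ρ l) t := by
      intro t
      rw [hA]
      simp only [map_sum, map_mul, conj_ee, Finset.sum_mul_sum]
      refine Finset.sum_congr rfl fun l _ => Finset.sum_congr rfl fun m _ => ?_
      have : ee (-ρ l) t * ee (ρ m) t = ee (ρ m - ρ l) t := by
        rw [ee_mul]; ring_nf
      rw [← this]; ring
    simp_rw [expand]
    rw [integral_finset_sum]
    · have inner_int : ∀ l ∈ G, ∀ m ∈ G,
          ∫ t in Ioc (0:ℝ) (1/4), ((starRingEnd ℂ) (d l) * d m) * ee (ρ m - ρ l) t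
          = if m = l then ((starRingEnd ℂ) (d l) * d l) * (1/4 : ℂ) else 0 := by
        intro l hl m hm
        rw [integral_const_mul]
        rcases eq_or_ne m l with h | h
        · subst h
          have h0 : ρ m - ρ m = 4 * ((0 : ℤ) : ℝ) := by simp
          rw [h0, orth_int 0, if_pos rfl, if_pos rfl]
        · obtain ⟨k, hk0, hk⟩ := hρ l hl m hm (fun hh => h hh.symm)
          rw [show ρ m - ρ l = 4 * ((k : ℤ) : ℝ) by exact_mod_cast hk, orth_int k,
            if_neg hk0, if_neg h, mul_zero]
      have : ∀ l ∈ G, ∫ t in Ioc (0:ℝ) (1/4),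
            (∑ m ∈ G, ((starRingEnd ℂ) (d l) * d m) * ee (ρ m - ρ l) t)
          = ((starRingEnd ℂ) (d l) * d l) * (1/4 : ℂ) := by
        intro l hl
        rw [integral_finset_sum]
        · rw [Finset.sum_congr rfl (fun m hm => inner_int l hl m hm), Finset.sum_ite_eq' G l _]
          simp [hl]
        · intro m _
          exact Continuous.integrableOn_Ioc (continuous_const.mul (continuous_ee _))
      rw [Finset.sum_congr rfl this]
      push_cast
      rw [Finset.mul_sum]
      refine Finset.sum_congr rfl fun l _ => ?_
      rw [Complex.conj_mul']
      push_cast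
      ring
    · intro l _
      apply Continuous.integrableOn_Ioc
      exact continuous_finset_sum _ fun m _ => continuous_const.mul (continuous_ee _)
  have hre : ∀ t, ‖A t‖ ^ 2 = RCLike.re ((starRingEnd ℂ) (A t) * A t) := by
    intro t
    rw [Complex.conj_mul']
    simp only [RCLike.re_to_complex, ← Complex.ofReal_pow, Complex.ofReal_re]
  refine (integral_congr_ae (Filter.Eventually.of_forall hre) :
    ∫ t in Ioc (0:ℝ) (1/4), ‖∑ l ∈ G, d l * ee (ρ l) t‖ ^ 2
      = ∫ t in Ioc (0:ℝ) (1/4), RCLike.re ((starRingEnd ℂ) (A t) * A t)).trans ?_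
  rw [integral_re, key]
  · simp only [RCLike.re_to_complex, Complex.ofReal_re]
  · exact Continuous.integrableOn_Ioc ((Complex.continuous_conj.comp hAc).mul hAc)

lemma w_ne_one {c : ℝ} (hc0 : 0 < c) (hc4 : c < 4) (hc2 : c ≠ 2) : ee c (1/2) ≠ 1 := by
  intro h
  rw [ee, Complex.exp_eq_one_iff] at h
  obtain ⟨n, hn⟩ := h
  have hpiI : (Real.pi : ℂ) * Complex.I ≠ 0 :=
    mul_ne_zero (by simp [Real.pi_ne_zero]) Complex.I_ne_zero
  have h2 : ((Real.pi:ℂ) * Complex.I) * (c:ℂ) = ((Real.pi:ℂ) * Complex.I) * ((2*n : ℤ):ℂ) := by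
    push_cast at hn ⊢
    linear_combination hn
  have h3 : (c:ℂ) = ((2*n:ℤ):ℂ) := mul_left_cancel₀ hpiI h2
  have hc2n : c = ((2*n:ℤ):ℝ) := by exact_mod_cast h3
  push_cast at hc2n
  have hn1 : n = 1 := by
    have : (0:ℝ) < 2*n := by linarith
    have : (2:ℝ)*n < 4 := by linarith
    have hlo : (0:ℤ) < n := by exact_mod_cast (by nlinarith : (0:ℝ) < (n:ℝ))
    have hhi : n < 2 := by exact_mod_cast (by nlinarith : (n:ℝ) < 2)
    omega
  rw [hn1] at hc2n
  norm_num at hc2n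
  exact hc2 hc2n

lemma norm_one_add_lt_two {w : ℂ} (hw : ‖w‖ = 1) (hwne : w ≠ 1) : ‖1 + w‖ < 2 := by
  have hsq : Complex.normSq w = 1 := by
    rw [Complex.normSq_eq_norm_sq, hw]; norm_num
  have hre : w.re < 1 := by
    by_contra hcon
    push_neg at hcon
    have hle : w.re ≤ 1 := by
      calc w.re ≤ |w.re| := le_abs_self _
        _ ≤ ‖w‖ := Complex.abs_re_le_norm w
        _ = 1 := by rw [hw]
    have hre1 : w.re = 1 := le_antisymm hle hcon
    have him : w.im = 0 := by
      have h := Complex.normSq_apply w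
      rw [hsq, hre1] at h
      nlinarith
    exact hwne (Complex.ext (by simpa using hre1) (by simp [him]))
  have h2 : Complex.normSq (1 + w) = 2 + 2 * w.re := by
    rw [Complex.normSq_add]
    simp [Complex.normSq_one, hsq, Complex.conj_re]
    norm_num
  have h3 : ‖1 + w‖ ^ 2 < 4 := by
    rw [Complex.sq_norm, h2]; linarith
  nlinarith [norm_nonneg (1 + w)]

lemma quad_bound (w a b : ℂ) (hw : ‖w‖ = 1) :
    (2 - ‖1 + w‖) * (‖a‖^2 + ‖b‖^2) ≤ ‖a + b‖^2 + ‖a + w*b‖^2 ∧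
    ‖a + b‖^2 + ‖a + w*b‖^2 ≤ (2 + ‖1 + w‖) * (‖a‖^2 + ‖b‖^2) := by
  have key : ‖a + b‖^2 + ‖a + w*b‖^2
      = 2 * ‖a‖^2 + 2 * ‖b‖^2 + 2 * ((a * (starRingEnd ℂ) b) * (1 + (starRingEnd ℂ) w)).re := by
    have e1 : ‖a + b‖^2 = Complex.normSq (a + b) := by
      rw [Complex.normSq_eq_norm_sq]
    have e2 : ‖a + w*b‖^2 = Complex.normSq (a + w*b) := by
      rw [Complex.normSq_eq_norm_sq]
    have e3 : ‖a‖^2 = Complex.normSq a := by rw [Complex.normSq_eq_norm_sq]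
    have e4 : ‖b‖^2 = Complex.normSq b := by rw [Complex.normSq_eq_norm_sq]
    have e5 : Complex.normSq (w*b) = Complex.normSq b := by
      rw [Complex.normSq_mul]
      have : Complex.normSq w = 1 := by
        rw [Complex.normSq_eq_norm_sq, hw]; norm_num
      rw [this, one_mul]
    rw [e1, e2, e3, e4, Complex.normSq_add, Complex.normSq_add, e5]
    have : (a * (starRingEnd ℂ) (w * b)).re = ((a * (starRingEnd ℂ) b) * (starRingEnd ℂ) w).re := by
      rw [map_mul]; ring_nf
    rw [this]
    have : ((a * (starRingEnd ℂ) b) * (1 + (starRingEnd ℂ) w)).re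
        = (a * (starRingEnd ℂ) b).re + ((a * (starRingEnd ℂ) b) * (starRingEnd ℂ) w).re := by
      rw [mul_add, mul_one, Complex.add_re]
    rw [this]; ring
  have hE : |((a * (starRingEnd ℂ) b) * (1 + (starRingEnd ℂ) w)).re| ≤ ‖a‖ * ‖b‖ * ‖1 + w‖ := by
    calc |((a * (starRingEnd ℂ) b) * (1 + (starRingEnd ℂ) w)).re|
        ≤ ‖(a * (starRingEnd ℂ) b) * (1 + (starRingEnd ℂ) w)‖ := Complex.abs_re_le_norm _
      _ = ‖a‖ * ‖b‖ * ‖1 + (starRingEnd ℂ) w‖ := by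
          rw [norm_mul, norm_mul, RCLike.norm_conj]
      _ = ‖a‖ * ‖b‖ * ‖1 + w‖ := by
          congr 1
          have : (1 : ℂ) + (starRingEnd ℂ) w = (starRingEnd ℂ) (1 + w) := by
            rw [map_add, map_one]
          rw [this, RCLike.norm_conj]
  have hab : 2 * (‖a‖ * ‖b‖) ≤ ‖a‖^2 + ‖b‖^2 := by nlinarith [sq_nonneg (‖a‖ - ‖b‖)]
  have h1w : (0:ℝ) ≤ ‖1 + w‖ := norm_nonneg _
  have habs := abs_le.mp hE
  constructor <;> [nlinarith [habs.1, mul_nonneg (mul_nonneg (norm_nonneg a) (norm_nonneg b)) h1w]; nlinarith [habs.2, mul_nonneg (mul_nonneg (norm_nonneg a) (norm_nonneg b)) h1w]]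

lemma ee_add (l s t : ℝ) : ee l (s + t) = ee l s * ee l t := by
  rw [ee, ee, ee, ← Complex.exp_add]; congr 1; push_cast; ring

lemma ee_zero (l : ℝ) : ee l 0 = 1 := by simp [ee]

lemma ee_four_int_half (n : ℤ) : ee (4 * n) (1/2) = 1 := by
  have := ee_add_half n 0
  rw [zero_add] at this
  rw [this, ee_zero]

-- the main finite-sum estimate
lemma riesz_bounds {c : ℝ} (hc0 : 0 < c) (hc4 : c < 4)
    (F : Finset ℝ) (cc : ℝ → ℂ)
    (hF : (F : Set ℝ) ⊆ {x : ℝ | ∃ n : ℤ, x = 4 * n} ∪ {x : ℝ | ∃ n : ℤ, x = 4 * n + c}) :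
    (2 - ‖1 + ee c (1/2)‖)/4 * ∑ l ∈ F, ‖cc l‖^2
      ≤ (∫ t in Ioc (0:ℝ) (1/4) ∪ Ioc (1/2:ℝ) (3/4), ‖∑ l ∈ F, cc l * ee l t‖^2) ∧
    (∫ t in Ioc (0:ℝ) (1/4) ∪ Ioc (1/2:ℝ) (3/4), ‖∑ l ∈ F, cc l * ee l t‖^2)
      ≤ (2 + ‖1 + ee c (1/2)‖)/4 * ∑ l ∈ F, ‖cc l‖^2 := by
  classical
  set w := ee c (1/2) with hw
  set f : ℝ → ℂ := fun t => ∑ l ∈ F, cc l * ee l t with hf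
  have hfc : Continuous f := continuous_finset_sum _ fun l _ => continuous_const.mul (continuous_ee _)
  set Λ0 : Set ℝ := {x : ℝ | ∃ n : ℤ, x = 4 * n} with hΛ0
  set F0 : Finset ℝ := F.filter (· ∈ Λ0) with hF0
  set F1 : Finset ℝ := F.filter (· ∉ Λ0) with hF1
  have hmem1 : ∀ l ∈ F1, ∃ n : ℤ, l = 4 * n + c := by
    intro l hl
    rw [hF1, Finset.mem_filter] at hl
    rcases hF hl.1 with h | h
    · exact absurd h hl.2
    · exact h
  set Af : ℝ → ℂ := fun t => ∑ l ∈ F0, cc l * ee l t with hAf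
  set Bf : ℝ → ℂ := fun t => ∑ l ∈ F1, cc l * ee (l - c) t with hBf
  have hAfc : Continuous Af := continuous_finset_sum _ fun l _ => continuous_const.mul (continuous_ee _)
  have hBfc : Continuous Bf := continuous_finset_sum _ fun l _ => continuous_const.mul (continuous_ee _)
  have h_fsplit : ∀ t, f t = Af t + ee c t * Bf t := by
    intro t
    rw [hf, hAf, hBf]
    simp only
    rw [Finset.mul_sum, ← Finset.sum_filter_add_sum_filter_not F (· ∈ Λ0)]
    congr 1
    refine Finset.sum_congr rfl fun l _ => ?_
    rw [mul_comm (ee c t) _, mul_assoc, ee_mul]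
    congr 2
    ring
  have h_fhalf : ∀ t, f (t + 1/2) = Af t + w * (ee c t * Bf t) := by
    intro t
    rw [hf, hAf, hBf]
    simp only
    rw [← Finset.sum_filter_add_sum_filter_not F (· ∈ Λ0)]
    congr 1
    · refine Finset.sum_congr rfl fun l hl => ?_
      obtain ⟨n, rfl⟩ := (Finset.mem_filter.mp hl).2
      rw [ee_add_half]
    · rw [Finset.mul_sum, Finset.mul_sum]
      refine Finset.sum_congr rfl fun l hl => ?_
      obtain ⟨n, rfl⟩ := hmem1 l hl
      rw [ee_add]
      have h1 : ee (4 * n + c) (1/2) = w := by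
        rw [hw, ← ee_mul, ee_four_int_half, one_mul]
      have h2 : ee c t * ee (4 * n + c - c) t = ee (4 * n + c) t := by
        rw [ee_mul]; congr 1; ring
      rw [h1, ← h2]
      ring
  -- disjointness of the two intervals
  have hdisj : Disjoint (Ioc (0:ℝ) (1/4)) (Ioc (1/2:ℝ) (3/4)) := by
    rw [Set.disjoint_left]
    rintro x ⟨_, hx2⟩ ⟨hx3, _⟩
    linarith
  have hint1 : IntegrableOn (fun t => ‖f t‖^2) (Ioc (0:ℝ) (1/4)) volume :=
    Continuous.integrableOn_Ioc (by fun_prop)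
  have hint2 : IntegrableOn (fun t => ‖f t‖^2) (Ioc (1/2:ℝ) (3/4)) volume :=
    Continuous.integrableOn_Ioc (by fun_prop)
  have step1 : (∫ t in Ioc (0:ℝ) (1/4) ∪ Ioc (1/2:ℝ) (3/4), ‖f t‖^2)
      = (∫ t in Ioc (0:ℝ) (1/4), ‖f t‖^2) + ∫ t in Ioc (1/2:ℝ) (3/4), ‖f t‖^2 :=
    setIntegral_union hdisj measurableSet_Ioc hint1 hint2
  have step2 : (∫ t in Ioc (1/2:ℝ) (3/4), ‖f t‖^2) = ∫ t in Ioc (0:ℝ) (1/4), ‖f (t + 1/2)‖^2 := by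
    rw [← intervalIntegral.integral_of_le (by norm_num : (1/2:ℝ) ≤ 3/4),
      ← intervalIntegral.integral_of_le (by norm_num : (0:ℝ) ≤ 1/4),
      intervalIntegral.integral_comp_add_right (fun t => ‖f t‖^2) (1/2)]
    norm_num
  have hquad : ∀ t, (2 - ‖1 + w‖) * (‖Af t‖^2 + ‖Bf t‖^2) ≤ ‖f t‖^2 + ‖f (t + 1/2)‖^2 ∧
      ‖f t‖^2 + ‖f (t + 1/2)‖^2 ≤ (2 + ‖1 + w‖) * (‖Af t‖^2 + ‖Bf t‖^2) := by
    intro t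
    have hb : ‖ee c t * Bf t‖ = ‖Bf t‖ := by rw [norm_mul, norm_ee, one_mul]
    have := quad_bound w (Af t) (ee c t * Bf t) (norm_ee c (1/2))
    rw [hb, h_fsplit t, h_fhalf t] at *
    exact this
  have horth0 : (∫ t in Ioc (0:ℝ) (1/4), ‖Af t‖^2) = (1/4) * ∑ l ∈ F0, ‖cc l‖^2 := by
    apply orth_expansion F0 cc (fun x => x)
    intro l hl m hm hlm
    rw [hF0, Finset.mem_filter] at hl hm
    obtain ⟨n, rfl⟩ := hl.2
    obtain ⟨m', rfl⟩ := hm.2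
    refine ⟨m' - n, fun h => hlm ?_, by push_cast; ring⟩
    have : m' = n := by omega
    rw [this]
  have horth1 : (∫ t in Ioc (0:ℝ) (1/4), ‖Bf t‖^2) = (1/4) * ∑ l ∈ F1, ‖cc l‖^2 := by
    apply orth_expansion F1 cc (fun x => x - c)
    intro l hl m hm hlm
    obtain ⟨n, rfl⟩ := hmem1 l hl
    obtain ⟨m', rfl⟩ := hmem1 m hm
    refine ⟨m' - n, fun h => hlm ?_, by push_cast; ring⟩
    have : m' = n := by omega
    rw [this]
  have hintA : IntegrableOn (fun t => ‖Af t‖^2 + ‖Bf t‖^2) (Ioc (0:ℝ) (1/4)) volume :=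
    Continuous.integrableOn_Ioc (by fun_prop)
  have hintf2 : IntegrableOn (fun t => ‖f t‖^2 + ‖f (t + 1/2)‖^2) (Ioc (0:ℝ) (1/4)) volume :=
    Continuous.integrableOn_Ioc (by fun_prop)
  have hL : (∫ t in Ioc (0:ℝ) (1/4), (‖Af t‖^2 + ‖Bf t‖^2)) = (1/4) * ∑ l ∈ F, ‖cc l‖^2 := by
    rw [integral_add (Continuous.integrableOn_Ioc (by fun_prop))
      (Continuous.integrableOn_Ioc (by fun_prop)), horth0, horth1,
      ← mul_add, ← Finset.sum_filter_add_sum_filter_not F (· ∈ Λ0)]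
  have htotal : (∫ t in Ioc (0:ℝ) (1/4) ∪ Ioc (1/2:ℝ) (3/4), ‖f t‖^2)
      = ∫ t in Ioc (0:ℝ) (1/4), (‖f t‖^2 + ‖f (t + 1/2)‖^2) := by
    rw [step1, step2, integral_add hint1 (Continuous.integrableOn_Ioc (by fun_prop))]
  constructor
  · rw [htotal]
    calc (2 - ‖1 + w‖)/4 * ∑ l ∈ F, ‖cc l‖^2
        = (2 - ‖1 + w‖) * ((1/4) * ∑ l ∈ F, ‖cc l‖^2) := by ring
      _ = ∫ t in Ioc (0:ℝ) (1/4), (2 - ‖1 + w‖) * (‖Af t‖^2 + ‖Bf t‖^2) := by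
          rw [integral_const_mul, hL]
      _ ≤ ∫ t in Ioc (0:ℝ) (1/4), (‖f t‖^2 + ‖f (t + 1/2)‖^2) := by
          apply setIntegral_mono_on (hintA.const_mul _) hintf2 measurableSet_Ioc
          intro t _
          exact (hquad t).1
  · rw [htotal]
    calc (∫ t in Ioc (0:ℝ) (1/4), (‖f t‖^2 + ‖f (t + 1/2)‖^2))
        ≤ ∫ t in Ioc (0:ℝ) (1/4), (2 + ‖1 + w‖) * (‖Af t‖^2 + ‖Bf t‖^2) := by
          apply setIntegral_mono_on hintf2 (hintA.const_mul _) measurableSet_Ioc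
          intro t _
          exact (hquad t).2
      _ = (2 + ‖1 + w‖)/4 * ∑ l ∈ F, ‖cc l‖^2 := by
          rw [integral_const_mul, hL]; ring

section Uniq

noncomputable instance fact14 : Fact ((0:ℝ) < 1/4) := ⟨by norm_num⟩

lemma uniq_fourier (G : ℝ → ℂ) (hGm : Measurable G)
    (hG : MemLp G 2 (volume.restrict (Ioc (0:ℝ) (1/4))))
    (h : ∀ n : ℤ, ∫ t in Ioc (0:ℝ) (1/4), ee (4*n) t * G t = 0) :
    G =ᵐ[volume.restrict (Ioc (0:ℝ) (1/4))] 0 := by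
  set φ : AddCircle (1/4 : ℝ) → ℂ := AddCircle.liftIoc (1/4) 0 G with hφ
  have hIoc : Ioc (0:ℝ) (0 + 1/4) = Ioc (0:ℝ) (1/4) := by rw [zero_add]
  have hφm : Measurable φ :=
    (hGm.comp measurable_subtype_coe).comp (AddCircle.measurableEquivIoc (1/4) 0).measurable
  have hφG : φ ∘ ((↑) : ℝ → AddCircle (1/4 : ℝ)) =ᵐ[volume.restrict (Ioc (0:ℝ) (1/4))] G := by
    rw [← hIoc]
    filter_upwards [ae_restrict_mem measurableSet_Ioc] with x hx
    exact AddCircle.liftIoc_coe_apply hx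
  have hmp : MeasurePreserving ((↑) : ℝ → AddCircle (1/4 : ℝ))
      (volume.restrict (Ioc (0:ℝ) (1/4))) (volume : Measure (AddCircle (1/4 : ℝ))) := by
    rw [← hIoc]
    exact AddCircle.measurePreserving_mk (1/4) 0
  have hφvol : MemLp φ 2 (volume : Measure (AddCircle (1/4 : ℝ))) := by
    refine ⟨hφm.aestronglyMeasurable, ?_⟩
    rw [← eLpNorm_comp_measurePreserving hφm.aestronglyMeasurable hmp,
      eLpNorm_congr_ae hφG]
    exact hG.2
  have hTne : ENNReal.ofReal ((1:ℝ)/4) ≠ 0 := by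
    simp only [ne_eq, ENNReal.ofReal_eq_zero, not_le]
    norm_num
  have hv : (volume : Measure (AddCircle (1/4 : ℝ)))
      = (ENNReal.ofReal ((1:ℝ)/4)) • AddCircle.haarAddCircle :=
    AddCircle.volume_eq_smul_haarAddCircle
  have hφhaar : MemLp φ 2 (AddCircle.haarAddCircle : Measure (AddCircle (1/4 : ℝ))) := by
    have h1 : (AddCircle.haarAddCircle : Measure (AddCircle (1/4 : ℝ)))
        = (ENNReal.ofReal ((1:ℝ)/4))⁻¹ • (volume : Measure (AddCircle (1/4 : ℝ))) := by
      rw [hv, smul_smul, ENNReal.inv_mul_cancel hTne (by simp), one_smul]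
    rw [h1]
    exact hφvol.smul_measure (by simp [hTne])
  set Φ : Lp ℂ 2 (AddCircle.haarAddCircle : Measure (AddCircle (1/4 : ℝ))) :=
    hφhaar.toLp φ with hΦ
  have hcoeff : ∀ n : ℤ, fourierCoeff φ n = 0 := by
    intro n
    rw [fourierCoeff_eq_intervalIntegral φ n 0]
    have hieq : (∫ x in (0:ℝ)..(0 + 1/4), fourier (-n) (x : AddCircle (1/4:ℝ)) • φ x) = 0 := by
      rw [intervalIntegral.integral_of_le (by norm_num : (0:ℝ) ≤ 0 + 1/4)]
      have heq : ∀ x ∈ Ioc (0:ℝ) (0 + 1/4), fourier (-n) (x : AddCircle (1/4:ℝ)) • φ x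
          = ee (4 * (-n : ℤ)) x * G x := by
        intro x hx
        rw [hφ, AddCircle.liftIoc_coe_apply hx, fourier_coe_apply, smul_eq_mul]
        simp only [ee]
        congr 2
        push_cast
        ring
      rw [setIntegral_congr_fun measurableSet_Ioc heq, hIoc]
      exact h (-n)
    rw [hieq, smul_zero]
  have hΦcoeff : ∀ n : ℤ, fourierCoeff (Φ : AddCircle (1/4:ℝ) → ℂ) n = 0 := by
    intro n
    rw [← hcoeff n]
    apply integral_congr_ae
    filter_upwards [hφhaar.coeFn_toLp] with x hx
    rw [hΦ, hx]
  have hΦ0 : Φ = 0 := by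
    have : fourierBasis.repr Φ = 0 := by
      ext n
      rw [fourierBasis_repr Φ n, hΦcoeff n]
      rfl
    simpa using (map_eq_zero_iff fourierBasis.repr (LinearIsometryEquiv.injective _)).mp this
  have hφ0 : φ =ᵐ[(AddCircle.haarAddCircle : Measure (AddCircle (1/4:ℝ)))] 0 := by
    have h1 : (Φ : AddCircle (1/4:ℝ) → ℂ)
        =ᵐ[(AddCircle.haarAddCircle : Measure (AddCircle (1/4:ℝ)))] 0 := by
      rw [hΦ0]; exact Lp.coeFn_zero _ _ _
    exact (hφhaar.coeFn_toLp.symm.trans h1 : _)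
  have hφ0v : φ =ᵐ[(volume : Measure (AddCircle (1/4:ℝ)))] 0 := by
    rw [hv]
    exact hφ0.filter_mono (Measure.ae_smul_measure_le _)
  have hcomp : φ ∘ ((↑) : ℝ → AddCircle (1/4:ℝ)) =ᵐ[volume.restrict (Ioc (0:ℝ) (1/4))] 0 := by
    have := MeasureTheory.ae_eq_comp (f := ((↑) : ℝ → AddCircle (1/4:ℝ)))
      (hmp.measurable.aemeasurable) (g := φ) (g' := 0) (by rw [hmp.map_eq]; exact hφ0v)
    simpa using this
  exact hφG.symm.trans hcomp

end Uniq

section Complete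

variable {c : ℝ}

lemma hS'fin : volume (Ioc (0:ℝ) (1/4) ∪ Ioc (1/2:ℝ) (3/4)) ≠ ⊤ := by
  refine ne_top_of_le_ne_top ?_ (measure_union_le _ _)
  simp [Real.volume_Ioc]

lemma hSfin : volume (Ico (0:ℝ) (1/4) ∪ Ico (1/2:ℝ) (3/4)) ≠ ⊤ := by
  refine ne_top_of_le_ne_top ?_ (measure_union_le _ _)
  simp [Real.volume_Ico]

lemma hres : volume.restrict (Ico (0:ℝ) (1/4) ∪ Ico (1/2:ℝ) (3/4))
    = volume.restrict (Ioc (0:ℝ) (1/4) ∪ Ioc (1/2:ℝ) (3/4)) := by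
  apply Measure.restrict_congr_set
  exact (Ico_ae_eq_Ioc).union (Ico_ae_eq_Ioc)

lemma hdisjJ : Disjoint (Ioc (0:ℝ) (1/4)) (Ioc (1/2:ℝ) (3/4)) := by
  rw [Set.disjoint_left]
  rintro x ⟨_, hx2⟩ ⟨hx3, _⟩
  linarith

lemma mp_half : MeasurePreserving (fun t : ℝ => t + 1/2)
    (volume.restrict (Ioc (0:ℝ) (1/4))) (volume.restrict (Ioc (1/2:ℝ) (3/4))) := by
  have h := (measurePreserving_add_right volume (1/2:ℝ)).restrict_preimage
    (measurableSet_Ioc : MeasurableSet (Ioc (1/2:ℝ) (3/4)))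
  have hpre : (fun t : ℝ => t + 1/2) ⁻¹' (Ioc (1/2:ℝ) (3/4)) = Ioc (0:ℝ) (1/4) := by
    rw [Set.preimage_add_const_Ioc]
    norm_num
  rwa [hpre] at h

lemma complete_zero (hc0 : 0 < c) (hc4 : c < 4) (hc2 : c ≠ 2)
    (f : Lp ℂ 2 (volume.restrict (Ico (0:ℝ) (1/4) ∪ Ico (1/2:ℝ) (3/4))))
    (horth : ∀ l ∈ ({x : ℝ | ∃ n : ℤ, x = 4 * n} ∪ {x : ℝ | ∃ n : ℤ, x = 4 * n + c}),
      (inner ℂ (expLp (Ico (0:ℝ) (1/4) ∪ Ico (1/2:ℝ) (3/4)) l) f : ℂ) = 0) :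
    f = 0 := by
  classical
  set J1 : Set ℝ := Ioc (0:ℝ) (1/4) with hJ1
  set J2 : Set ℝ := Ioc (1/2:ℝ) (3/4) with hJ2
  set u : ℝ → ℂ := ⇑f with hu
  have hum : Measurable u := (Lp.stronglyMeasurable f).measurable
  set w : ℂ := ee c (1/2) with hw
  set Λ : Set ℝ := {x : ℝ | ∃ n : ℤ, x = 4 * n} ∪ {x : ℝ | ∃ n : ℤ, x = 4 * n + c} with hΛ
  have horth' : ∀ l ∈ Λ, ∫ t in J1 ∪ J2, ee (-l) t * u t = 0 := by
    intro l hl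
    have h0 := horth l hl
    rw [MeasureTheory.L2.inner_def] at h0
    have hcong : ∫ t, (inner ℂ ((expLp (Ico (0:ℝ) (1/4) ∪ Ico (1/2:ℝ) (3/4)) l : ℝ → ℂ) t) (u t) : ℂ)
          ∂(volume.restrict (Ico (0:ℝ) (1/4) ∪ Ico (1/2:ℝ) (3/4)))
        = ∫ t, ee (-l) t * u t ∂(volume.restrict (Ico (0:ℝ) (1/4) ∪ Ico (1/2:ℝ) (3/4))) := by
      apply integral_congr_ae
      filter_upwards [coeFn_expLp hSfin l] with t ht
      rw [RCLike.inner_apply, ht, conj_ee, mul_comm]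
    rw [hcong, hres] at h0
    exact h0
  haveI hfin1 : IsFiniteMeasure (volume.restrict J1) :=
    isFiniteRestrict (by simp [hJ1, Real.volume_Ioc])
  haveI hfin2 : IsFiniteMeasure (volume.restrict J2) :=
    isFiniteRestrict (by simp [hJ2, Real.volume_Ioc])
  have huL2 : MemLp u 2 (volume.restrict (J1 ∪ J2)) := by
    rw [← hres]
    exact Lp.memLp f
  have huJ1 : MemLp u 2 (volume.restrict J1) :=
    huL2.mono_measure (Measure.restrict_mono subset_union_left le_rfl)
  have huJ2 : MemLp u 2 (volume.restrict J2) :=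
    huL2.mono_measure (Measure.restrict_mono subset_union_right le_rfl)
  have hush : MemLp (fun t => u (t + 1/2)) 2 (volume.restrict J1) :=
    huJ2.comp_measurePreserving mp_half
  have hint1 : ∀ l : ℝ, Integrable (fun t => ee l t * u t) (volume.restrict J1) := fun l =>
    Integrable.bdd_mul (huJ1.integrable (by norm_num))
      (continuous_ee l).aestronglyMeasurable (Filter.Eventually.of_forall fun t => le_of_eq (norm_ee l t))
  have hint2 : ∀ l : ℝ, Integrable (fun t => ee l t * u t) (volume.restrict J2) := fun l =>
    Integrable.bdd_mul (huJ2.integrable (by norm_num))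
      (continuous_ee l).aestronglyMeasurable (Filter.Eventually.of_forall fun t => le_of_eq (norm_ee l t))
  have hintsh : ∀ l : ℝ, Integrable (fun t => ee l (t + 1/2) * u (t + 1/2))
      (volume.restrict J1) := by
    intro l
    have h := (memLp_one_iff_integrable.mpr (hint2 l)).comp_measurePreserving mp_half
    exact memLp_one_iff_integrable.mp h
  have key : ∀ l ∈ Λ, (∫ t in J1, ee (-l) t * u t)
      + (∫ t in J1, ee (-l) (t + 1/2) * u (t + 1/2)) = 0 := by
    intro l hl
    have h0 := horth' l hl
    rw [setIntegral_union hdisjJ measurableSet_Ioc (hint1 (-l)) (hint2 (-l))] at h0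
    have htrans : (∫ t in J2, ee (-l) t * u t)
        = ∫ t in J1, ee (-l) (t + 1/2) * u (t + 1/2) :=
      (mp_half.integral_comp (MeasurableEquiv.addRight (1/2:ℝ)).measurableEmbedding
        (fun s => ee (-l) s * u s)).symm
    rw [htrans] at h0
    exact h0
  -- claim 1
  have claim1 : ∀ n : ℤ, ∫ t in J1, ee (4*n) t * ((fun s => u s + u (s + 1/2)) t) = 0 := by
    intro n
    have hl : (4 * ((-n : ℤ) : ℝ)) ∈ Λ := Or.inl ⟨-n, rfl⟩
    have hk := key _ hl
    have hneg : -(4 * ((-n : ℤ) : ℝ)) = 4 * (n : ℝ) := by push_cast; ring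
    rw [hneg] at hk
    rw [← hk, ← integral_add (hint1 (4*(n:ℝ))) (hintsh (4*(n:ℝ)))]
    apply integral_congr_ae
    filter_upwards with t
    rw [ee_add_half n t]
    ring
  -- claim 2
  have claim2 : ∀ n : ℤ, ∫ t in J1, ee (4*n) t *
      ((fun s => ee (-c) s * (u s + (starRingEnd ℂ) w * u (s + 1/2))) t) = 0 := by
    intro n
    have hl : (4 * ((-n : ℤ) : ℝ) + c) ∈ Λ := Or.inr ⟨-n, rfl⟩
    have hk := key _ hl
    set l : ℝ := 4 * ((-n : ℤ) : ℝ) + c with hldef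
    have e1 : ∀ t : ℝ, ee (-l) t = ee (4*(n:ℝ)) t * ee (-c) t := by
      intro t
      rw [ee_mul]
      congr 1
      rw [hldef]; push_cast; ring
    have ehalf : ee (-l) (1/2 : ℝ) = (starRingEnd ℂ) w := by
      have h1 : ee (-l) (1/2 : ℝ) = ee (4*(n:ℝ)) (1/2) * ee (-c) (1/2) := e1 (1/2)
      rw [h1, ee_four_int_half n, one_mul, hw, conj_ee]
    have e2 : ∀ t : ℝ, ee (-l) (t + 1/2) = ee (4*(n:ℝ)) t * ee (-c) t * (starRingEnd ℂ) w := by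
      intro t
      rw [ee_add (-l) t (1/2), ehalf, e1 t]
    rw [← hk, ← integral_add (hint1 (-l)) (hintsh (-l))]
    apply integral_congr_ae
    filter_upwards with t
    rw [e1 t, e2 t]
    ring
  -- apply uniqueness
  have hG1 : (fun s => u s + u (s + 1/2)) =ᵐ[volume.restrict J1] 0 := by
    apply uniq_fourier _ (hum.add (hum.comp (measurable_add_const (1/2:ℝ))))
      (huJ1.add hush) claim1
  have hH : MemLp (fun s => u s + (starRingEnd ℂ) w * u (s + 1/2)) 2 (volume.restrict J1) :=
    huJ1.add (hush.const_mul _)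
  have hHm : Measurable (fun s => u s + (starRingEnd ℂ) w * u (s + 1/2)) :=
    hum.add ((hum.comp (measurable_add_const (1/2:ℝ))).const_mul _)
  have hG2mem : MemLp (fun s => ee (-c) s * (u s + (starRingEnd ℂ) w * u (s + 1/2))) 2
      (volume.restrict J1) := by
    refine ⟨(((continuous_ee (-c)).measurable).mul hHm).aestronglyMeasurable, ?_⟩
    have : eLpNorm (fun s => ee (-c) s * (u s + (starRingEnd ℂ) w * u (s + 1/2))) 2
        (volume.restrict J1)
        = eLpNorm (fun s => u s + (starRingEnd ℂ) w * u (s + 1/2)) 2 (volume.restrict J1) := by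
      apply eLpNorm_congr_norm_ae
      filter_upwards with s
      rw [norm_mul, norm_ee, one_mul]
    rw [this]
    exact hH.2
  have hG2 : (fun s => ee (-c) s * (u s + (starRingEnd ℂ) w * u (s + 1/2)))
      =ᵐ[volume.restrict J1] 0 :=
    uniq_fourier _ (((continuous_ee (-c)).measurable).mul hHm) hG2mem claim2
  have hH0 : (fun s => u s + (starRingEnd ℂ) w * u (s + 1/2)) =ᵐ[volume.restrict J1] 0 := by
    filter_upwards [hG2] with s hs
    simp only [Pi.zero_apply] at hs ⊢
    rcases mul_eq_zero.mp hs with h | h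
    · exact absurd h (ee_ne_zero _ _)
    · exact h
  have hcw : (1:ℂ) - (starRingEnd ℂ) w ≠ 0 := by
    rw [sub_ne_zero]
    intro h
    apply w_ne_one hc0 hc4 hc2
    rw [hw] at *
    calc ee c (1/2) = (starRingEnd ℂ) ((starRingEnd ℂ) (ee c (1/2))) := by rw [Complex.conj_conj]
      _ = (starRingEnd ℂ) 1 := by rw [← h]
      _ = 1 := by rw [map_one]
  have hshift0 : (fun s => u (s + 1/2)) =ᵐ[volume.restrict J1] 0 := by
    filter_upwards [hG1, hH0] with s h1 h2
    simp only [Pi.zero_apply] at h1 h2 ⊢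
    have h3 : (1 - (starRingEnd ℂ) w) * u (s + 1/2) = 0 := by
      linear_combination h1 - h2
    rcases mul_eq_zero.mp h3 with h | h
    · exact absurd h hcw
    · exact h
  have hJ1zero : u =ᵐ[volume.restrict J1] 0 := by
    filter_upwards [hG1, hshift0] with s h1 h2
    simp only [Pi.zero_apply] at h1 h2 ⊢
    rw [h2, add_zero] at h1
    exact h1
  have hJ2zero : u =ᵐ[volume.restrict J2] 0 := by
    have hmeas0 : MeasurableSet {x : ℝ | u x = 0} := hum (measurableSet_singleton 0)
    have h1 : ∀ᵐ x ∂(volume.restrict J1).map (fun t : ℝ => t + 1/2), u x = 0 := by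
      rw [ae_map_iff (measurable_add_const (1/2:ℝ)).aemeasurable hmeas0]
      exact hshift0
    rw [mp_half.map_eq] at h1
    exact h1
  have hSzero : u =ᵐ[volume.restrict (J1 ∪ J2)] 0 := by
    rw [Measure.restrict_union hdisjJ measurableSet_Ioc]
    exact (ae_add_measure_iff).mpr ⟨hJ1zero, hJ2zero⟩
  rw [Lp.eq_zero_iff_ae_eq_zero]
  show u =ᵐ[volume.restrict (Ico (0:ℝ) (1/4) ∪ Ico (1/2:ℝ) (3/4))] 0
  rw [hres]
  exact hSzero

end Complete

theorem statement_13 (c : ℝ) (hc0 : 0 < c) (hc4 : c < 4) (hc2 : c ≠ 2) :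
    ExpRieszBasis (Set.Ico 0 (1 / 4) ∪ Set.Ico (1 / 2) (3 / 4))
      ({x : ℝ | ∃ n : ℤ, x = 4 * n} ∪ {x : ℝ | ∃ n : ℤ, x = 4 * n + c}) := by
  have hw1 : ‖ee c (1/2)‖ = 1 := norm_ee c (1/2)
  have hδ2 : ‖1 + ee c (1/2)‖ < 2 := norm_one_add_lt_two hw1 (w_ne_one hc0 hc4 hc2)
  have hδ0 : (0:ℝ) ≤ ‖1 + ee c (1/2)‖ := norm_nonneg _
  constructor
  · -- completeness
    show (Submodule.span ℂ (expLp (Set.Ico 0 (1 / 4) ∪ Set.Ico (1 / 2) (3 / 4)) ''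
      ({x : ℝ | ∃ n : ℤ, x = 4 * n} ∪ {x : ℝ | ∃ n : ℤ, x = 4 * n + c}))).topologicalClosure = ⊤
    rw [Submodule.topologicalClosure_eq_top_iff, Submodule.eq_bot_iff]
    intro f hf
    apply complete_zero hc0 hc4 hc2 f
    intro l hl
    exact (Submodule.mem_orthogonal _ f).mp hf _ (Submodule.subset_span ⟨l, hl, rfl⟩)
  · -- Riesz sequence
    refine ⟨(2 - ‖1 + ee c (1/2)‖)/4, (2 + ‖1 + ee c (1/2)‖)/4, ?_, ?_, ?_⟩
    · linarith
    · linarith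
    · intro F cc hF
      have hnorm : ‖∑ l ∈ F, cc l • expLp (Set.Ico 0 (1 / 4) ∪ Set.Ico (1 / 2) (3 / 4)) l‖ ^ 2
          = ∫ t in Ioc (0:ℝ) (1/4) ∪ Ioc (1/2:ℝ) (3/4), ‖∑ l ∈ F, cc l * ee l t‖ ^ 2 := by
        rw [norm_sq_eq_integral _ _ (coeFn_sum_expLp hSfin F cc), hres]
      rw [hnorm]
      exact ⟨(riesz_bounds hc0 hc4 F cc hF).1, (riesz_bounds hc0 hc4 F cc hF).2⟩
end
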